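/- arXiv:1605.06072 — 8 statements merged into one kernel-verified Lean document; each statement's English description precedes it below -/
import Mathlib

section
/- Let (c_k) be the sequence of reals defined by c_1 = 2 and c_k = c_{k-1} + 1 + sqrt(1 + 2 c_{k-1}) for k ≥ 2. Then for every integer k ≥ 1 one has k^2/2 ≤ c_k ≤ 2 k^2. -/
/-! The bounds propagate along the recursion: if `t²/2 ≤ x ≤ 2t²` with `t ≥ 0`, then
`t ≤ √(1 + 2x) ≤ 1 + 2t`, so the next term `x + 1 + √(1 + 2x)` lies between
`(t+1)²/2` and `2(t+1)²`. Induction on `k` starting from `c 1 = 2` does the rest. -/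

open Set

lemma le_sqrt_one_add_two_mul {t x : ℝ} (hx : t ^ 2 / 2 ≤ x) :
    t ≤ √(1 + 2 * x) :=
  Real.le_sqrt_of_sq_le (by linarith)

lemma sqrt_one_add_two_mul_le {t x : ℝ} (ht : 0 ≤ t) (hx : x ≤ 2 * t ^ 2) :
    √(1 + 2 * x) ≤ 1 + 2 * t :=
  Real.sqrt_le_iff.mpr ⟨by linarith, by nlinarith⟩

lemma add_one_add_sqrt_mem_Icc {t x : ℝ} (ht : 0 ≤ t) (hx : x ∈ Icc (t ^ 2 / 2) (2 * t ^ 2)) :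
    x + 1 + √(1 + 2 * x) ∈ Icc ((t + 1) ^ 2 / 2) (2 * (t + 1) ^ 2) := by
  have hlow := le_sqrt_one_add_two_mul hx.1
  have hup := sqrt_one_add_two_mul_le ht hx.2
  constructor <;> linarith [hx.1, hx.2]

/-- For the sequence `c` defined by `c 1 = 2` and
`c k = c (k-1) + 1 + √(1 + 2 c (k-1))` for `k ≥ 2`, we have `k²/2 ≤ c k ≤ 2 k²` for all `k ≥ 1`. -/
theorem stmt_0 (c : ℕ → ℝ) (h1 : c 1 = 2)
    (hrec : ∀ k : ℕ, 2 ≤ k → c k = c (k - 1) + 1 + Real.sqrt (1 + 2 * c (k - 1))) :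
    ∀ k : ℕ, 1 ≤ k → (k : ℝ) ^ 2 / 2 ≤ c k ∧ c k ≤ 2 * (k : ℝ) ^ 2 := by
  intro k hk
  induction k, hk using Nat.le_induction with
  | base => norm_num [h1]
  | succ n _ ih =>
    rw [hrec (n + 1) (by omega), Nat.add_sub_cancel]
    push_cast
    exact add_one_add_sqrt_mem_Icc n.cast_nonneg ih
end

section
/- Define reals ρ_{k,N} for integers 0 ≤ k ≤ N by: ρ_{0,N} = 0 for all N ≥ 0, ρ_{k,k} = k/2 for all k ≥ 1, and ρ_{k,N} = ρ_{k,N-1} − (ρ_{k,N-1} − ρ_{k-1,N-1})^2/2 for N > k ≥ 1. Let (c_k) be defined by c_1 = 2 and c_k = c_{k-1} + 1 + sqrt(1 + 2 c_{k-1}) for k ≥ 2. Then for every fixed integer k ≥ 1, lim_{N→∞} N · ρ_{k,N} = c_k. -/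
/-
Write `t_N = N ρ_{k,N}` and `u_N = N ρ_{k-1,N}`, and assume `u_N → b` by induction on `k`
(`0 ≤ ρ_{k,N} - ρ_{k-1,N} ≤ 1` is propagated by the recurrence). One step of the recurrence
changes `t_N` by `(t - (t - u)² / 2) / N + O(N⁻²)`, and at `u = b` this drift vanishes exactly at
`b + 1 ± √(1 + 2b)`: it is negative above the larger root and positive between the roots. As
`∑ 1/N` diverges, `t_N` cannot stay on one side of the larger root at a fixed distance, and since
its steps become small it is eventually trapped near it. To stay above the smaller root, note that
`t_N ≥ u_N → b` and that `1/ρ_{k,N+1} ≤ 1/ρ_{k,N} + 1`, whence `liminf t_N ≥ 1`.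
-/
open Filter Topology Finset

lemma tendsto_atBot_of_succ_le_sub_div {t : ℕ → ℝ} {η : ℝ} (hη : 0 < η) {M : ℕ}
    (h : ∀ N ≥ M, t (N + 1) ≤ t N - η / (N + 1)) : Tendsto t atTop atBot := by
  set H : ℕ → ℝ := fun N => ∑ i ∈ range N, 1 / ((i : ℝ) + 1)
  have hS : ∀ N ≥ M, t N + η * H N ≤ t M + η * H M := by
    intro N hN
    induction N, hN using Nat.le_induction with
    | base => rfl
    | succ n hn ih =>
      have := h n hn
      simp only [H, sum_range_succ, mul_add, mul_one_div] at ih ⊢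
      linarith
  have hH : Tendsto (fun N => t M + η * H M - η * H N) atTop atBot :=
    tendsto_atBot_add_const_left _ _
      (tendsto_neg_atTop_atBot.comp
        (Real.tendsto_sum_range_one_div_nat_succ_atTop.const_mul_atTop hη))
  refine tendsto_atBot_mono' _ ?_ hH
  filter_upwards [eventually_ge_atTop M] with N hN
  linarith [hS N hN]

lemma eventually_le_of_drift_down {t : ℕ → ℝ} {a a' η : ℝ} (hη : 0 < η) (ha : a ≤ a')
    (hdown : ∀ᶠ N in atTop, a ≤ t N → t (N + 1) ≤ t N - η / (N + 1))
    (hstep : ∀ᶠ N in atTop, t N < a → t (N + 1) ≤ a') :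
    ∀ᶠ N in atTop, t N ≤ a' := by
  obtain ⟨M, hM⟩ := eventually_atTop.1 (hdown.and hstep)
  obtain ⟨N₀, hN₀M, hN₀⟩ : ∃ N₀ ≥ M, t N₀ < a := by
    by_contra! hge
    have hbot := tendsto_atBot_of_succ_le_sub_div hη fun N hN => (hM N hN).1 (hge N hN)
    obtain ⟨N, hN, hlt⟩ := ((eventually_ge_atTop M).and (hbot.eventually_lt_atBot a)).exists
    exact (hge N hN).not_gt hlt
  refine eventually_atTop.2 ⟨N₀, fun N hN => ?_⟩
  induction N, hN using Nat.le_induction with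
  | base => exact hN₀.le.trans ha
  | succ n hn ih =>
    rcases lt_or_ge (t n) a with hlt | hge
    · exact (hM n (hN₀M.trans hn)).2 hlt
    · have := (hM n (hN₀M.trans hn)).1 hge
      have : 0 ≤ η / (n + 1) := by positivity
      linarith

lemma eventually_ge_of_drift_up {t : ℕ → ℝ} {a a' η : ℝ} (hη : 0 < η) (ha : a' ≤ a)
    (hup : ∀ᶠ N in atTop, t N ≤ a → t N + η / (N + 1) ≤ t (N + 1))
    (hstep : ∀ᶠ N in atTop, a < t N → a' ≤ t (N + 1)) :
    ∀ᶠ N in atTop, a' ≤ t N := by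
  have := eventually_le_of_drift_down (t := fun N => -t N) hη (neg_le_neg ha)
    (hup.mono fun N h hN => by linarith [h (by linarith)])
    (hstep.mono fun N h hN => by linarith [h (by linarith)])
  exact this.mono fun N hN => by linarith

noncomputable def drift (t u : ℝ) : ℝ := t - (t - u) ^ 2 / 2

section Roots
variable {b w : ℝ} (hb : 0 ≤ b) (hw : w ^ 2 = 1 + 2 * b) (hw0 : 0 ≤ w)
include hb hw hw0

lemma drift_le_of_upper_root_add_le {t u δ : ℝ} (hδ : 0 < δ) (ht : b + 1 + w + δ ≤ t)
    (hu : u ≤ b + δ / 4) : drift t u ≤ -(δ / 2) := by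
  have hw1 : 1 ≤ w := by nlinarith
  have hroots : (t - (b + 1 + w)) * (t - (b + 1 - w)) = (t - b) ^ 2 - 2 * t := by
    linear_combination -hw
  have hsq : (t - b) ^ 2 - δ / 2 * (t - b) ≤ (t - u) ^ 2 := by nlinarith
  unfold drift
  nlinarith [mul_le_mul_of_nonneg_right (show δ ≤ t - (b + 1 + w) by linarith)
    (show 0 ≤ t - (b + 1 - w) by linarith)]

lemma le_drift_of_between_roots {t u m δ ε : ℝ} (hm : 0 ≤ m) (hδ : 0 ≤ δ)
    (ht₁ : b + 1 - w + m ≤ t) (ht₂ : t ≤ b + 1 + w - δ) (hu0 : 0 ≤ u) (hut : u ≤ t)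
    (hub : |u - b| ≤ ε) (hε : 8 * ε * (b + 1 + w) ≤ m * δ) : m * δ / 4 ≤ drift t u := by
  have hroots : (t - (b + 1 - w)) * (b + 1 + w - t) = 2 * t - (t - b) ^ 2 := by
    linear_combination hw
  have hbase : m * δ ≤ 2 * t - (t - b) ^ 2 :=
    hroots ▸ mul_le_mul (by linarith) (by linarith) hδ (by linarith)
  have hperturb : (t - u) ^ 2 - (t - b) ^ 2 ≤ ε * (4 * (b + 1 + w)) := by
    have hprod : (t - u) ^ 2 - (t - b) ^ 2 = (b - u) * (2 * t - u - b) := by ring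
    rw [hprod]
    calc (b - u) * (2 * t - u - b) ≤ |b - u| * |2 * t - u - b| := by
          rw [← abs_mul]; exact le_abs_self _
      _ ≤ ε * (4 * (b + 1 + w)) := by
          rw [abs_sub_comm] at hub
          refine mul_le_mul hub (abs_le.2 ⟨by linarith, by linarith⟩) (abs_nonneg _) ?_
          exact (abs_nonneg _).trans hub
  unfold drift
  linarith

lemma lower_root_lt_max : b + 1 - w < max 1 b := by
  rw [lt_max_iff]
  by_contra! h
  nlinarith

end Roots

/-- Models `x = ρ k`, `y = ρ (k - 1)` and `n₀ = k`. -/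
structure IsCostRecurrence (x y : ℕ → ℝ) (n₀ : ℕ) : Prop where
  nonneg : ∀ N ≥ n₀, 0 ≤ y N
  le : ∀ N ≥ n₀, y N ≤ x N
  le_add_one : ∀ N ≥ n₀, x N ≤ y N + 1
  succ : ∀ N ≥ n₀, x (N + 1) = x N - (x N - y N) ^ 2 / 2

namespace IsCostRecurrence

variable {x y : ℕ → ℝ} {n₀ : ℕ} (h : IsCostRecurrence x y n₀)
include h

lemma half_le_succ {N : ℕ} (hN : n₀ ≤ N) : x N / 2 ≤ x (N + 1) := by
  have := h.nonneg N hN; have := h.le N hN; have := h.le_add_one N hN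
  rw [h.succ N hN]
  nlinarith

lemma pos (hx : 0 < x n₀) {N : ℕ} (hN : n₀ ≤ N) : 0 < x N := by
  induction N, hN using Nat.le_induction with
  | base => exact hx
  | succ n hn ih => linarith [h.half_le_succ hn]

lemma inv_succ_le (hx : 0 < x n₀) {N : ℕ} (hN : n₀ ≤ N) : (x (N + 1))⁻¹ ≤ (x N)⁻¹ + 1 := by
  have hxN := h.pos hx hN
  have hxN' := h.pos hx (hN.trans N.le_succ)
  have hdiff : x N - x (N + 1) ≤ x N * x (N + 1) :=
    calc x N - x (N + 1) = (x N - y N) ^ 2 / 2 := by rw [h.succ N hN]; ring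
      _ ≤ x N * (x N / 2) := by nlinarith [h.nonneg N hN, h.le N hN]
      _ ≤ x N * x (N + 1) := mul_le_mul_of_nonneg_left (h.half_le_succ hN) hxN.le
  have hinv : (x (N + 1))⁻¹ - (x N)⁻¹ = (x N - x (N + 1)) / (x N * x (N + 1)) := by
    field_simp
  linarith [(div_le_one (mul_pos hxN hxN')).2 hdiff]

lemma inv_le (hx : 0 < x n₀) {N : ℕ} (hN : n₀ ≤ N) : (x N)⁻¹ ≤ (x n₀)⁻¹ + (N - n₀) := by
  induction N, hN using Nat.le_induction with
  | base => simp
  | succ n hn ih => push_cast; linarith [h.inv_succ_le hx hn]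

lemma eventually_lt_mul (hx : 0 < x n₀) {a : ℝ} (ha : a < 1) :
    ∀ᶠ N : ℕ in atTop, a < N * x N := by
  set A := (x n₀)⁻¹ - n₀
  have hlim := tendsto_natCast_div_add_atTop A
  filter_upwards [hlim.eventually (eventually_gt_nhds ha), eventually_ge_atTop n₀,
    tendsto_natCast_atTop_atTop.eventually_gt_atTop (-A)] with N hlt hN hpos
  have hxN := h.pos hx hN
  have hinv : (x N)⁻¹ ≤ N + A := by linarith [h.inv_le hx hN]
  calc a < N / (N + A) := hlt
    _ ≤ N * x N := by
      rw [div_le_iff₀ (by linarith)]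
      have := (inv_le_iff_one_le_mul₀ hxN).1 hinv
      nlinarith [(Nat.cast_nonneg N : (0:ℝ) ≤ N)]

lemma natCast_mul_nonneg {N : ℕ} (hN : n₀ ≤ N) : 0 ≤ (N : ℝ) * y N :=
  mul_nonneg N.cast_nonneg (h.nonneg N hN)

lemma natCast_mul_le {N : ℕ} (hN : n₀ ≤ N) : (N : ℝ) * y N ≤ N * x N :=
  mul_le_mul_of_nonneg_left (h.le N hN) N.cast_nonneg

lemma scaled_succ {N : ℕ} (hN : n₀ ≤ N) (hN1 : 1 ≤ N) :
    ((N + 1 : ℕ) : ℝ) * x (N + 1) - N * x N =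
      drift (N * x N) (N * y N) / N - (N * x N - N * y N) ^ 2 / (2 * N ^ 2) := by
  have : (N : ℝ) ≠ 0 := by positivity
  rw [h.succ N hN, drift]
  push_cast
  field_simp
  ring

variable {b w : ℝ} (hb : 0 ≤ b) (hw : w ^ 2 = 1 + 2 * b) (hw0 : 0 ≤ w)
  (hy : Tendsto (fun N : ℕ => (N : ℝ) * y N) atTop (𝓝 b))
include hb hw hw0 hy

lemma eventually_mul_le {δ : ℝ} (hδ : 0 < δ) :
    ∀ᶠ N : ℕ in atTop, N * x N ≤ b + 1 + w + 2 * δ := by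
  refine eventually_le_of_drift_down (t := fun N : ℕ => (N : ℝ) * x N) (a := b + 1 + w + δ)
    (half_pos hδ) (by linarith) ?_ ?_
  · filter_upwards [eventually_ge_atTop n₀, eventually_ge_atTop 1,
      hy.eventually (eventually_le_nhds (show b < b + δ / 4 by linarith))] with N hN hN1 hu ht
    have hpos : (0 : ℝ) < N := Nat.cast_pos.2 hN1
    have hstep := h.scaled_succ hN hN1
    have hdrift : drift (N * x N) (N * y N) / N ≤ -(δ / 2 / (N + 1)) :=
      calc drift (N * x N) (N * y N) / N ≤ -(δ / 2) / N :=
            div_le_div_of_nonneg_right (drift_le_of_upper_root_add_le hb hw hw0 hδ ht hu) hpos.le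
        _ ≤ -(δ / 2 / (N + 1)) := by
            rw [neg_div, neg_le_neg_iff]
            exact div_le_div_of_nonneg_left (by positivity) hpos (by linarith)
    have : 0 ≤ (N * x N - N * y N) ^ 2 / (2 * N ^ 2) := by positivity
    linarith
  · filter_upwards [eventually_ge_atTop n₀, eventually_ge_atTop 1,
      (tendsto_const_div_atTop_nhds_zero_nat (b + 1 + w + δ)).eventually
        (eventually_le_nhds hδ)] with N hN hN1 hsmall ht
    have hpos : (0 : ℝ) < N := Nat.cast_pos.2 hN1
    have hstep := h.scaled_succ hN hN1
    have hdrift : drift (N * x N) (N * y N) / N ≤ (b + 1 + w + δ) / N := by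
      refine div_le_div_of_nonneg_right ?_ hpos.le
      have : 0 ≤ (N * x N - N * y N) ^ 2 / 2 := by positivity
      unfold drift; linarith
    have : 0 ≤ (N * x N - N * y N) ^ 2 / (2 * N ^ 2) := by positivity
    linarith

lemma eventually_sq_sub_le :
    ∀ᶠ N : ℕ in atTop, (N * x N - N * y N) ^ 2 ≤ (b + 1 + w + 2) ^ 2 := by
  filter_upwards [h.eventually_mul_le hb hw hw0 hy one_pos, eventually_ge_atTop n₀] with N ht hN
  have := h.natCast_mul_nonneg hN
  have := h.natCast_mul_le hN
  exact pow_le_pow_left₀ (by linarith) (by linarith) 2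

lemma eventually_sub_le_succ {δ : ℝ} (hδ : 0 < δ) :
    ∀ᶠ N : ℕ in atTop, N * x N - δ ≤ ((N + 1 : ℕ) : ℝ) * x (N + 1) := by
  filter_upwards [eventually_ge_atTop n₀, eventually_ge_atTop 1, h.eventually_sq_sub_le hb hw hw0 hy,
    (tendsto_const_div_atTop_nhds_zero_nat ((b + 1 + w + 2) ^ 2)).eventually
      (eventually_le_nhds hδ)] with N hN hN1 hD hsmall
  have hN1' : (1 : ℝ) ≤ N := by exact_mod_cast hN1
  have hstep := h.scaled_succ hN hN1
  have hx0 := (h.natCast_mul_nonneg hN).trans (h.natCast_mul_le hN)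
  have hCN := (div_le_iff₀ (by positivity)).1 hsmall
  have hdrift : -(δ / 2) ≤ drift (N * x N) (N * y N) / N := by
    rw [le_div_iff₀ (by positivity), drift]
    nlinarith
  have hcorr : (N * x N - N * y N) ^ 2 / (2 * N ^ 2) ≤ δ / 2 := by
    rw [div_le_div_iff₀ (by positivity) (by norm_num)]
    nlinarith
  linarith

lemma eventually_floor_le_mul (hx : 0 < x n₀) :
    ∀ᶠ N : ℕ in atTop, (b + 1 - w + max 1 b) / 2 ≤ N * x N := by
  have hlt : (b + 1 - w + max 1 b) / 2 < max 1 b := by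
    linarith [lower_root_lt_max hb hw hw0]
  rcases lt_max_iff.1 hlt with h1 | hb'
  · exact (h.eventually_lt_mul hx h1).mono fun N hN => hN.le
  · filter_upwards [hy.eventually (eventually_ge_nhds hb'), eventually_ge_atTop n₀]
      with N hu hN
    exact hu.trans (h.natCast_mul_le hN)

lemma exists_eventually_drift_up (hx : 0 < x n₀) {δ : ℝ} (hδ : 0 < δ) :
    ∃ η > 0, ∀ᶠ N : ℕ in atTop, N * x N ≤ b + 1 + w - δ →
      N * x N + η / (N + 1) ≤ ((N + 1 : ℕ) : ℝ) * x (N + 1) := by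
  set m := (max 1 b - (b + 1 - w)) / 2 with hm_def
  have hm : 0 < m := half_pos (sub_pos.2 (lower_root_lt_max hb hw hw0))
  set η := m * δ / 8 with hη_def
  have hη : 0 < η := by positivity
  set ε := m * δ / (8 * (b + 1 + w))
  have hε : 0 < ε := by positivity
  have hεη : 8 * ε * (b + 1 + w) = m * δ := by simp only [ε]; field_simp
  refine ⟨η, hη, ?_⟩
  filter_upwards [eventually_ge_atTop n₀, eventually_ge_atTop 1,
    h.eventually_floor_le_mul hb hw hw0 hy hx, hy.eventually (Metric.closedBall_mem_nhds b hε),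
    h.eventually_sq_sub_le hb hw hw0 hy,
    (tendsto_const_div_atTop_nhds_zero_nat ((b + 1 + w + 2) ^ 2)).eventually
      (eventually_le_nhds hη)] with N hN hN1 hfloor hu hD hsmall ht
  have hpos : (0 : ℝ) < N := Nat.cast_pos.2 hN1
  have hstep := h.scaled_succ hN hN1
  have hdrift : 2 * η / N ≤ drift (N * x N) (N * y N) / N := by
    refine div_le_div_of_nonneg_right ?_ hpos.le
    have := le_drift_of_between_roots hb hw hw0 hm.le hδ.le (by linarith) ht
      (h.natCast_mul_nonneg hN) (h.natCast_mul_le hN) (by rwa [← Real.dist_eq]) hεη.le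
    linarith
  have hCN := (div_le_iff₀ hpos).1 hsmall
  have hcorr : (N * x N - N * y N) ^ 2 / (2 * N ^ 2) ≤ η / N := by
    rw [div_le_div_iff₀ (by positivity) hpos]
    nlinarith
  have hsucc : η / (N + 1) ≤ η / N := div_le_div_of_nonneg_left hη.le hpos (by linarith)
  have hsplit : 2 * η / N = η / N + η / N := by ring
  linarith

lemma eventually_le_mul (hx : 0 < x n₀) {δ : ℝ} (hδ : 0 < δ) :
    ∀ᶠ N : ℕ in atTop, b + 1 + w - 2 * δ ≤ N * x N := by
  obtain ⟨η, hη, hup⟩ := h.exists_eventually_drift_up hb hw hw0 hy hx hδ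
  exact eventually_ge_of_drift_up (t := fun N : ℕ => (N : ℝ) * x N) hη (by linarith) hup
    ((h.eventually_sub_le_succ hb hw hw0 hy hδ).mono fun N hN ht => by linarith)

end IsCostRecurrence

theorem IsCostRecurrence.tendsto {x y : ℕ → ℝ} {n₀ : ℕ} {b : ℝ} (h : IsCostRecurrence x y n₀)
    (hx : 0 < x n₀) (hy : Tendsto (fun N : ℕ => (N : ℝ) * y N) atTop (𝓝 b)) :
    Tendsto (fun N : ℕ => (N : ℝ) * x N) atTop (𝓝 (b + 1 + √(1 + 2 * b))) := by
  have hb : 0 ≤ b := ge_of_tendsto hy <| (eventually_ge_atTop n₀).mono fun N hN =>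
    mul_nonneg N.cast_nonneg (h.nonneg N hN)
  have hw : √(1 + 2 * b) ^ 2 = 1 + 2 * b := Real.sq_sqrt (by linarith)
  have hw0 := Real.sqrt_nonneg (1 + 2 * b)
  refine tendsto_order.2 ⟨fun a ha => ?_, fun a ha => ?_⟩
  · filter_upwards [h.eventually_le_mul hb hw hw0 hy hx (δ := (b + 1 + √(1 + 2 * b) - a) / 3)
      (by linarith)] with N hN
    linarith
  · filter_upwards [h.eventually_mul_le hb hw hw0 hy (δ := (a - (b + 1 + √(1 + 2 * b))) / 3)
      (by linarith)] with N hN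
    linarith

lemma sub_sq_half_sub_sub_sq_half_mem_Icc {x y z : ℝ} (hxy : x - y ∈ Set.Icc 0 1)
    (hyz : y - z ∈ Set.Icc 0 1) :
    (x - (x - y) ^ 2 / 2) - (y - (y - z) ^ 2 / 2) ∈ Set.Icc 0 1 := by
  obtain ⟨h0, h1⟩ := hxy
  obtain ⟨h2, h3⟩ := hyz
  constructor <;> nlinarith

section Rho

variable {ρ : ℕ → ℕ → ℝ} (hdiag : ∀ j, ρ j j = j / 2)
  (hsucc : ∀ j N, j ≤ N → ρ j (N + 1) = ρ j N - (ρ j N - ρ (j - 1) N) ^ 2 / 2)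
include hdiag hsucc

lemma rho_sub_mem_Icc :
    ∀ k N, k ≤ N → ρ k N - ρ (k - 1) N ∈ Set.Icc 0 1 := by
  intro k
  induction k with
  | zero => intro N _; simp
  | succ k ihk =>
    intro N hN
    rw [Nat.add_sub_cancel]
    induction N, hN using Nat.le_induction with
    | base =>
      obtain ⟨hd0, hd1⟩ := ihk k le_rfl
      rw [hdiag] at hd0 hd1
      rw [hsucc k k le_rfl, hdiag, hdiag]
      push_cast
      constructor <;> nlinarith
    | succ n hn ihn =>
      have := sub_sq_half_sub_sub_sq_half_mem_Icc ihn (ihk n (by omega))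
      rwa [hsucc (k + 1) n hn, hsucc k n (by omega), Nat.add_sub_cancel]

lemma rho_nonneg (h0 : ∀ N, ρ 0 N = 0) :
    ∀ k N, k ≤ N → 0 ≤ ρ k N := by
  intro k
  induction k with
  | zero => intro N _; rw [h0]
  | succ k ihk =>
    intro N hN
    have := (rho_sub_mem_Icc hdiag hsucc (k + 1) N hN).1
    rw [Nat.add_sub_cancel] at this
    linarith [ihk N (by omega)]

lemma isCostRecurrence_rho (h0 : ∀ N, ρ 0 N = 0) (k : ℕ) :
    IsCostRecurrence (ρ (k + 1)) (ρ k) (k + 1) where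
  nonneg N hN := rho_nonneg hdiag hsucc h0 k N (by omega)
  le N hN := by
    have := (rho_sub_mem_Icc hdiag hsucc (k + 1) N hN).1
    rw [Nat.add_sub_cancel] at this
    linarith
  le_add_one N hN := by
    have := (rho_sub_mem_Icc hdiag hsucc (k + 1) N hN).2
    rw [Nat.add_sub_cancel] at this
    linarith
  succ N hN := hsucc (k + 1) N hN

end Rho

/-- For the dynamic-programming values `ρ k N` of the `k`-purchase problem,
with `ρ 0 N = 0`, `ρ k k = k/2` and `ρ k N = ρ k (N-1) - (ρ k (N-1) - ρ (k-1) (N-1))²/2`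
for `N > k ≥ 1`, we have `N · ρ k N → c k` as `N → ∞`, for every fixed `k ≥ 1`. -/
theorem stmt_4 (ρ : ℕ → ℕ → ℝ)
    (h0 : ∀ N : ℕ, ρ 0 N = 0)
    (hdiag : ∀ k : ℕ, 1 ≤ k → ρ k k = (k : ℝ) / 2)
    (hrec : ∀ k N : ℕ, 1 ≤ k → k < N →
      ρ k N = ρ k (N - 1) - (ρ k (N - 1) - ρ (k - 1) (N - 1)) ^ 2 / 2)
    (c : ℕ → ℝ) (hc1 : c 1 = 2)
    (hcrec : ∀ k : ℕ, 2 ≤ k → c k = c (k - 1) + 1 + Real.sqrt (1 + 2 * c (k - 1)))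
    (k : ℕ) (hk : 1 ≤ k) :
    Filter.Tendsto (fun N : ℕ => (N : ℝ) * ρ k N) Filter.atTop (nhds (c k)) := by
  have hdiag' : ∀ j, ρ j j = j / 2 := by
    intro j
    rcases Nat.eq_zero_or_pos j with rfl | hj
    · simp [h0]
    · exact hdiag j hj
  have hsucc : ∀ j N, j ≤ N → ρ j (N + 1) = ρ j N - (ρ j N - ρ (j - 1) N) ^ 2 / 2 := by
    intro j N hjN
    rcases Nat.eq_zero_or_pos j with rfl | hj
    · simp [h0]
    · simpa using hrec j (N + 1) hj (by omega)
  have hlim : ∀ j b, Tendsto (fun N : ℕ => (N : ℝ) * ρ j N) atTop (𝓝 b) →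
      Tendsto (fun N : ℕ => (N : ℝ) * ρ (j + 1) N) atTop (𝓝 (b + 1 + √(1 + 2 * b))) :=
    fun j _ => (isCostRecurrence_rho hdiag' hsucc h0 j).tendsto (by rw [hdiag']; positivity)
  induction k, hk using Nat.le_induction with
  | base =>
    have h1 := hlim 0 0 (by simp [h0])
    rw [hc1]
    rwa [show (0 : ℝ) + 1 + √(1 + 2 * 0) = 2 by norm_num] at h1
  | succ k hk ih =>
    rw [hcrec (k + 1) (by omega), Nat.add_sub_cancel]
    exact hlim k _ ih
end

section
/- Define reals ρ_{k,N} for integers 0 ≤ k ≤ N by: ρ_{0,N} = 0, ρ_{k,k} = k/2 for k ≥ 1, and ρ_{k,N} = ρ_{k,N-1} − (ρ_{k,N-1} − ρ_{k-1,N-1})^2/2 for N > k ≥ 1. Let (c_k) be defined by c_1 = 2 and c_k = c_{k-1} + 1 + sqrt(1 + 2 c_{k-1}) for k ≥ 2. Then ρ_{k,N} ≤ c_k / N for all integers N ≥ k ≥ 1. -/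
/-!
Put `c₀ = 0` and `b_k = √(2 c_k)`. Then `b_{k+1} = 1 + √(1 + b_k²)`, so `c_k - c_{k-1} = b_k` and
`k ≤ b_k ≤ k + √k`. With `x = ρ_{k,N}` and `y = ρ_{k-1,N}` the recurrence reads
`ρ_{k,N+1} = y + h(x - y)` for `h(t) = t - t²/2`, which increases on `t ≤ 1` and is bounded by `1/2`.
By induction on `N`, `x ≤ c_k/N` and `y ≤ c_{k-1}/N = (c_k - b_k)/N`. If `b_k ≤ N`, the maximum of
`y + h(x - y)` over this box is `c_k/N - b_k²/(2N²) = c_k (N - 1)/N² ≤ c_k/(N + 1)`; otherwise it is at most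
`(c_k - b_k)/N + 1/2`, which is below `c_k/(N + 1)` because `(b_k - (N + 1))² ≤ N + 1`.
-/

open Real

/-- The sequence `c` of the theorem, extended by `c 0 = 0` so that the recurrence also yields `c 1 = 2`. -/
structure IsCostSeq (c : ℕ → ℝ) : Prop where
  zero : c 0 = 0
  succ : ∀ k, c (k + 1) = c k + 1 + √(1 + 2 * c k)

namespace IsCostSeq

variable {c : ℕ → ℝ}

lemma nonneg (hc : IsCostSeq c) (k : ℕ) : 0 ≤ c k := by
  induction k with
  | zero => exact hc.zero.ge
  | succ k ih => rw [hc.succ]; positivity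

lemma two_mul_eq_sq (hc : IsCostSeq c) (k : ℕ) : 2 * c k = √(2 * c k) ^ 2 :=
  (sq_sqrt (by linarith [hc.nonneg k])).symm

lemma sqrt_two_mul_succ (hc : IsCostSeq c) (k : ℕ) :
    √(2 * c (k + 1)) = 1 + √(1 + 2 * c k) := by
  have hs : √(1 + 2 * c k) ^ 2 = 1 + 2 * c k := sq_sqrt (by linarith [hc.nonneg k])
  rw [hc.succ, show 2 * (c k + 1 + √(1 + 2 * c k)) = (1 + √(1 + 2 * c k)) ^ 2 by nlinarith,
    sqrt_sq (by positivity)]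

lemma succ_sub (hc : IsCostSeq c) (k : ℕ) : c (k + 1) - c k = √(2 * c (k + 1)) := by
  rw [hc.sqrt_two_mul_succ, hc.succ]
  ring

lemma natCast_le_sqrt_two_mul (hc : IsCostSeq c) (k : ℕ) : (k : ℝ) ≤ √(2 * c k) := by
  induction k with
  | zero => simp
  | succ k ih =>
    have : √(2 * c k) ≤ √(1 + 2 * c k) := sqrt_le_sqrt (by linarith)
    rw [hc.sqrt_two_mul_succ]
    push_cast
    linarith

lemma sqrt_two_mul_le (hc : IsCostSeq c) (k : ℕ) : √(2 * c k) ≤ k + √k := by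
  induction k with
  | zero => simp [hc.zero]
  | succ k ih =>
    have hk : √(k : ℝ) ≤ √(k + 1) := sqrt_le_sqrt (by linarith)
    have hb := hc.two_mul_eq_sq k
    have hb0 := sqrt_nonneg (2 * c k)
    have hk1 : √((k : ℝ) + 1) ^ 2 = k + 1 := sq_sqrt (by positivity)
    -- `1 + (k + √k)² ≤ (k + √(k + 1))²`
    have : √(1 + 2 * c k) ≤ k + √(k + 1) := by
      rw [sqrt_le_iff]
      refine ⟨by positivity, ?_⟩
      nlinarith [mul_le_mul_of_nonneg_left hk (Nat.cast_nonneg (α := ℝ) k),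
        mul_self_le_mul_self hb0 ih, sq_sqrt (Nat.cast_nonneg (α := ℝ) k)]
    rw [hc.sqrt_two_mul_succ]
    push_cast
    linarith

lemma half_le_div (hc : IsCostSeq c) (k : ℕ) : (k : ℝ) / 2 ≤ c k / k := by
  rcases Nat.eq_zero_or_pos k with rfl | hk
  · simp
  have hk' : (0 : ℝ) < k := by exact_mod_cast hk
  rw [div_le_div_iff₀ two_pos hk']
  nlinarith [hc.natCast_le_sqrt_two_mul k, hc.two_mul_eq_sq k]

end IsCostSeq

lemma sub_sub_sq_div_two_le_add_half (x y : ℝ) : x - (x - y) ^ 2 / 2 ≤ y + 1 / 2 := by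
  nlinarith [sq_nonneg (x - y - 1)]

lemma sub_sub_sq_div_two_le {x y A B : ℝ} (hx : x ≤ A) (hy : y ≤ B) (hBA : B ≤ A) (hAB : A ≤ B + 1) :
    x - (x - y) ^ 2 / 2 ≤ A - (A - B) ^ 2 / 2 := by
  nlinarith [mul_nonneg (sub_nonneg.2 hx) (by linarith : 0 ≤ 1 - (A - B)),
    mul_nonneg (sub_nonneg.2 hy) (sub_nonneg.2 hBA), sq_nonneg (A - x - (B - y))]

lemma sub_sub_sq_div_two_le_div_succ {n a b x y : ℝ} (hn : 0 < n) (hab : 2 * a = b ^ 2)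
    (hb : 0 ≤ b) (hbn : b ≤ n + 1 + √(n + 1)) (hx : x ≤ a / n) (hy : y ≤ (a - b) / n) :
    x - (x - y) ^ 2 / 2 ≤ a / (n + 1) := by
  have ha : 0 ≤ a := by nlinarith
  rcases le_or_gt b n with hb_le | hb_gt
  · calc x - (x - y) ^ 2 / 2 ≤ a / n - (a / n - (a - b) / n) ^ 2 / 2 :=
          sub_sub_sq_div_two_le hx hy (by gcongr; linarith)
            (by rw [← sub_le_iff_le_add', ← sub_div, div_le_one hn]; linarith)
      _ = a * (n - 1) / n ^ 2 := by field_simp; linear_combination hab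
      _ ≤ a / (n + 1) := by
        rw [div_le_div_iff₀ (by positivity) (by linarith)]
        nlinarith
  · have hs : √(n + 1) ^ 2 = n + 1 := sq_sqrt (by linarith)
    have hs1 : 1 ≤ √(n + 1) := by rw [one_le_sqrt]; linarith
    have key : (b - (n + 1)) ^ 2 ≤ n + 1 := by
      nlinarith [mul_nonneg (by linarith : 0 ≤ √(n + 1) - (b - (n + 1)))
        (by linarith : 0 ≤ √(n + 1) + (b - (n + 1)))]
    calc x - (x - y) ^ 2 / 2 ≤ y + 1 / 2 := sub_sub_sq_div_two_le_add_half x y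
      _ ≤ (a - b) / n + 1 / 2 := by linarith
      _ ≤ a / (n + 1) := by
        rw [div_add' _ _ _ hn.ne', div_le_div_iff₀ hn (by linarith)]
        nlinarith

theorem le_div_of_isCostSeq {ρ : ℕ → ℕ → ℝ} {c : ℕ → ℝ}
    (h0 : ∀ N : ℕ, ρ 0 N = 0)
    (hdiag : ∀ k : ℕ, 1 ≤ k → ρ k k = (k : ℝ) / 2)
    (hrec : ∀ k N : ℕ, 1 ≤ k → k < N →
      ρ k N = ρ k (N - 1) - (ρ k (N - 1) - ρ (k - 1) (N - 1)) ^ 2 / 2)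
    (hc : IsCostSeq c) (k N : ℕ) (hkN : k ≤ N) : ρ k N ≤ c k / N := by
  induction N generalizing k with
  | zero =>
    obtain rfl : k = 0 := by omega
    simp [h0, hc.zero]
  | succ n ih =>
    rcases k with _ | j
    · simp [h0, hc.zero]
    obtain rfl | hjn : j = n ∨ j < n := by omega
    · rw [hdiag _ (by omega)]
      exact hc.half_le_div _
    have hstep := hrec (j + 1) (n + 1) (by omega) (by omega)
    simp only [Nat.add_sub_cancel] at hstep
    have hn : (0 : ℝ) < n := by exact_mod_cast (show 0 < n by omega)
    have hjn' : (j : ℝ) + 1 ≤ n := by exact_mod_cast hjn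
    have hbound : √(2 * c (j + 1)) ≤ n + 1 + √(n + 1) := by
      have := hc.sqrt_two_mul_le (j + 1)
      have : √((j : ℝ) + 1) ≤ √(n + 1) := sqrt_le_sqrt (by linarith)
      push_cast at *
      linarith
    rw [hstep, Nat.cast_succ]
    refine sub_sub_sq_div_two_le_div_succ hn (hc.two_mul_eq_sq _) (sqrt_nonneg _) hbound
      (ih _ (by omega)) ?_
    rw [← hc.succ_sub, sub_sub_cancel]
    exact ih j (by omega)

/-- For the dynamic-programming values `ρ k N` of the `k`-purchase problem,
`ρ k N ≤ c k / N` for all `N ≥ k ≥ 1`. -/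
theorem stmt_5 (ρ : ℕ → ℕ → ℝ)
    (h0 : ∀ N : ℕ, ρ 0 N = 0)
    (hdiag : ∀ k : ℕ, 1 ≤ k → ρ k k = (k : ℝ) / 2)
    (hrec : ∀ k N : ℕ, 1 ≤ k → k < N →
      ρ k N = ρ k (N - 1) - (ρ k (N - 1) - ρ (k - 1) (N - 1)) ^ 2 / 2)
    (c : ℕ → ℝ) (hc1 : c 1 = 2)
    (hcrec : ∀ k : ℕ, 2 ≤ k → c k = c (k - 1) + 1 + Real.sqrt (1 + 2 * c (k - 1))) :
    ∀ k N : ℕ, 1 ≤ k → k ≤ N → ρ k N ≤ c k / N := by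
  have hc : IsCostSeq (Function.update c 0 0) := by
    refine ⟨by simp, fun k => ?_⟩
    rcases k with _ | k
    · norm_num [hc1]
    · simpa using hcrec (k + 2) (by omega)
  intro k N hk hkN
  simpa [Function.update_of_ne (show k ≠ 0 by omega)] using le_div_of_isCostSeq h0 hdiag hrec hc k N hkN
end

section
/- Define reals ρ_{k,N} for integers 0 ≤ k ≤ N by: ρ_{0,N} = 0, ρ_{k,k} = k/2 for k ≥ 1, and ρ_{k,N} = ρ_{k,N-1} − (ρ_{k,N-1} − ρ_{k-1,N-1})^2/2 for N > k ≥ 1. Let (c_k) be defined by c_1 = 2 and c_k = c_{k-1} + 1 + sqrt(1 + 2 c_{k-1}) for k ≥ 2. Then ρ_{k,N} ≥ (1 − N^{−1/2}) · c_k / N for all integers N ≥ k ≥ 1. -/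
/-!
Write `T x y = x - (x - y)² / 2`, so that `ρ (k+1) (N+1) = T (ρ (k+1) N) (ρ k N)`. Consecutive
differences `ρ (k+1) N - ρ k N` stay in `[0, 1]`, a region on which `T` is monotone in both
arguments. With `c 0 = 0` the recursion for `c` is equivalent to `(c (k+1) - c k)² = 2 c (k+1)`,
which gives `T (c (k+1) u) (c k u) = c (k+1) (u - u²)`. Hence `c k * u N ≤ ρ k N` for every
sequence `u` with `u (N+1) ≤ u N - u N ²` that is admissible on the diagonal, `c k * u k ≤ k / 2`.
The rate `(1 - N^{-1/2}) / N` is such a sequence from `N = 8` on; on the diagonal this needs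
`c k ≤ (s⁴ + s³ + s² + s + 1) / 2` with `s = √k`, a bound that the recursion propagates once
`k ≥ 7`.
-/

open Real

theorem sub_sq_half_le_sub_sq_half {a b x y : ℝ} (hax : a ≤ x) (hby : b ≤ y) (hyx : y ≤ x)
    (hxy : x ≤ y + 1) : a - (a - b) ^ 2 / 2 ≤ x - (x - y) ^ 2 / 2 := by
  rcases le_or_gt (x - y) (a - b) with h | h
  · nlinarith [mul_le_mul h h (sub_nonneg.2 hyx) (by linarith)]
  · nlinarith [mul_nonneg (sub_nonneg.2 h.le) (show 0 ≤ 2 - (x - y) - (a - b) by linarith)]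

structure IsPurchaseCost (ρ : ℕ → ℕ → ℝ) : Prop where
  zero : ∀ N, ρ 0 N = 0
  diag : ∀ k, ρ k k = k / 2
  succ : ∀ k N, k + 1 ≤ N → ρ (k + 1) (N + 1) = ρ (k + 1) N - (ρ (k + 1) N - ρ k N) ^ 2 / 2

namespace IsPurchaseCost

variable {ρ : ℕ → ℕ → ℝ}

theorem succ_sub_mem_Icc (hρ : IsPurchaseCost ρ) :
    ∀ N k, k + 1 ≤ N → ρ (k + 1) N - ρ k N ∈ Set.Icc (0 : ℝ) 1 := by
  intro N
  induction N with
  | zero => intro k hk; omega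
  | succ M ih =>
    intro k hk
    rcases Nat.lt_or_ge k M with hkM | hkM
    · obtain ⟨h₁, h₂⟩ := ih k hkM
      rw [hρ.succ k M hkM]
      -- the new difference is `e - e² / 2 + e' ² / 2`, with `e, e'` old differences in `[0, 1]`
      rcases k with _ | j
      · simp only [hρ.zero] at h₁ h₂ ⊢
        constructor <;> nlinarith
      · obtain ⟨h₃, h₄⟩ := ih j (by omega)
        rw [hρ.succ j M (by omega)]
        constructor <;> nlinarith
    · obtain rfl : k = M := by omega
      rw [hρ.diag]
      rcases k with _ | j
      · simp only [hρ.zero]; norm_num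
      · obtain ⟨h₁, h₂⟩ := ih j le_rfl
        rw [hρ.diag] at h₁ h₂
        rw [hρ.succ j (j + 1) le_rfl, hρ.diag]
        push_cast at h₁ h₂ ⊢
        constructor <;> nlinarith

theorem mul_le_of_le_sub_sq (hρ : IsPurchaseCost ρ) {d u : ℕ → ℝ} (hd0 : d 0 = 0)
    (hd : ∀ k, (d (k + 1) - d k) ^ 2 = 2 * d (k + 1))
    (hdiag : ∀ k, d k * u k ≤ k / 2) (hu : ∀ N, u (N + 2) ≤ u (N + 1) - u (N + 1) ^ 2) :
    ∀ N k, k ≤ N → d k * u N ≤ ρ k N := by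
  intro N
  induction N with
  | zero =>
    intro k hk
    obtain rfl : k = 0 := by omega
    simp [hd0, hρ.zero]
  | succ M ih =>
    intro k hk
    rcases Nat.lt_or_ge k (M + 1) with hkM | hkM
    · rcases k with _ | j
      · simp [hd0, hρ.zero]
      · obtain ⟨M, rfl⟩ : ∃ L, M = L + 1 := ⟨M - 1, by omega⟩
        obtain ⟨h₁, h₂⟩ := hρ.succ_sub_mem_Icc (M + 1) j (by omega)
        have hdj : 0 ≤ d (j + 1) := by linarith [hd j, sq_nonneg (d (j + 1) - d j)]
        calc d (j + 1) * u (M + 2)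
            ≤ d (j + 1) * (u (M + 1) - u (M + 1) ^ 2) := mul_le_mul_of_nonneg_left (hu M) hdj
          _ = d (j + 1) * u (M + 1) - (d (j + 1) * u (M + 1) - d j * u (M + 1)) ^ 2 / 2 := by
            rw [← sub_mul, mul_pow, hd]; ring
          _ ≤ ρ (j + 1) (M + 1) - (ρ (j + 1) (M + 1) - ρ j (M + 1)) ^ 2 / 2 :=
            sub_sq_half_le_sub_sq_half (ih _ (by omega)) (ih _ (by omega)) (by linarith)
              (by linarith)
          _ = ρ (j + 1) (M + 2) := (hρ.succ j (M + 1) (by omega)).symm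
    · obtain rfl : k = M + 1 := by omega
      rw [hρ.diag]; exact hdiag _

end IsPurchaseCost

noncomputable def costStep (x : ℝ) : ℝ := x + 1 + √(1 + 2 * x)

theorem le_costStep (x : ℝ) : x + 1 ≤ costStep x := by
  unfold costStep; linarith [sqrt_nonneg (1 + 2 * x)]

theorem costStep_sub_sq {x : ℝ} (hx : 0 ≤ x) : (costStep x - x) ^ 2 = 2 * costStep x := by
  have h := sq_sqrt (show 0 ≤ 1 + 2 * x by linarith)
  unfold costStep; linear_combination h

theorem costStep_le_of_le {x p q : ℝ} (hxp : x ≤ p) (hq : p + 1 ≤ q)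
    (h : 1 + 2 * p ≤ (q - p - 1) ^ 2) : costStep x ≤ q := by
  have := (sqrt_le_sqrt (show 1 + 2 * x ≤ 1 + 2 * p by linarith)).trans (sqrt_le_sqrt h)
  rw [sqrt_sq (by linarith)] at this
  unfold costStep; linarith

noncomputable def costPoly (s : ℝ) : ℝ := (s ^ 4 + s ^ 3 + s ^ 2 + s + 1) / 2

theorem costStep_le_costPoly {x σ s : ℝ} (hx : x ≤ costPoly σ) (hσ : 0 ≤ σ) (hσ7 : 7 ≤ σ ^ 2)
    (hs : 0 ≤ s) (hsσ : s ^ 2 = σ ^ 2 + 1) : costStep x ≤ costPoly s := by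
  have hσs : σ ≤ s := by nlinarith
  have hgap : 3 * σ / 2 ≤ (s - σ) * (2 * σ ^ 2 + 2 + s * σ) := by
    nlinarith [mul_nonneg hσ (sub_nonneg.2 hσs), sq_nonneg (s - σ)]
  have hdiff : costPoly s - costPoly σ - 1 = σ ^ 2 + (s - σ) * (2 * σ ^ 2 + 2 + s * σ) / 2 := by
    have h3 : s ^ 3 = s * (σ ^ 2 + 1) := by rw [pow_succ, hsσ]; ring
    have h4 : s ^ 4 = (σ ^ 2 + 1) ^ 2 := by rw [← hsσ]; ring
    unfold costPoly
    rw [h3, h4]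
    linear_combination (1 / 2 - σ / 2) * hsσ
  have hσ26 : (2.6 : ℝ) ≤ σ := by nlinarith
  have hsq : σ ^ 4 + σ ^ 3 + σ ^ 2 + σ + 2 ≤ (σ ^ 2 + 3 * σ / 4) ^ 2 := by
    nlinarith [mul_le_mul_of_nonneg_left hσ26 (sq_nonneg σ)]
  have hsq' : (σ ^ 2 + 3 * σ / 4) ^ 2 ≤ (costPoly s - costPoly σ - 1) ^ 2 := by
    rw [hdiff]; exact pow_le_pow_left₀ (by positivity) (by linarith) 2
  refine costStep_le_of_le hx (by nlinarith) ?_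
  unfold costPoly at hsq' ⊢
  linarith

noncomputable def lowerRate (x : ℝ) : ℝ := (1 - 1 / √x) / x

theorem lowerRate_eq {x : ℝ} (hx : 0 < x) : lowerRate x = (√x - 1) / √x ^ 3 := by
  have hs : 0 < √x := sqrt_pos.2 hx
  calc lowerRate x = (1 - 1 / √x) / √x ^ 2 := by rw [sq_sqrt hx.le]; rfl
    _ = (√x - 1) / √x ^ 3 := by field_simp

theorem lowerRate_le {x q : ℝ} (hx : 0 < x) (h : x * (1 - x * q) ^ 2 ≤ 1) : lowerRate x ≤ q := by
  have hs : 0 < √x := sqrt_pos.2 hx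
  have key : 1 - x * q ≤ 1 / √x := by
    rw [le_div_iff₀ hs]
    rcases le_or_gt (1 - x * q) 0 with hq | hq
    · nlinarith
    · calc (1 - x * q) * √x = √(x * (1 - x * q) ^ 2) := by
            rw [sqrt_mul hx.le, sqrt_sq hq.le, mul_comm]
        _ ≤ 1 := sqrt_le_one.mpr h
  unfold lowerRate
  rw [div_le_iff₀ hx]
  linarith

theorem lowerRate_succ_le {x : ℝ} (hx : 7 ≤ x) :
    lowerRate (x + 1) ≤ lowerRate x - lowerRate x ^ 2 := by
  have hs7 : 7 ≤ √x ^ 2 := by rwa [sq_sqrt (by linarith)]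
  have hts : √(x + 1) ^ 2 = √x ^ 2 + 1 := by rw [sq_sqrt (by linarith), sq_sqrt (by linarith)]
  rw [lowerRate_eq (by linarith), lowerRate_eq (by linarith)]
  set s := √x
  set t := √(x + 1)
  have hs : 0 < s := sqrt_pos.2 (by linarith)
  have ht : 0 < t := sqrt_pos.2 (by linarith)
  have hs26 : 2.6 ≤ s := by nlinarith
  have ht_le : 2 * s * t ≤ 2 * s ^ 2 + 1 := by
    nlinarith [sq_nonneg (2 * s * t), sq_nonneg (2 * s ^ 2 + 1)]
  have hpoly : 0 ≤ s ^ 5 - 4 * s ^ 4 + 5 * s ^ 3 - 4 * s ^ 2 + 2 * s - 1 := by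
    nlinarith [mul_nonneg (sub_nonneg.2 hs26) (sq_nonneg (s - 2)), sq_nonneg (s - 2),
      mul_nonneg (mul_nonneg (sub_nonneg.2 hs26) (sub_nonneg.2 hs26)) (sq_nonneg s)]
  have hR : 0 < s ^ 5 - s ^ 3 + 2 * s ^ 2 - 2 * s + 1 := by nlinarith
  have key : t * (s ^ 5 - s ^ 3 + 2 * s ^ 2 - 2 * s + 1) ≤ s ^ 6 := by
    nlinarith [mul_le_mul_of_nonneg_right ht_le hR.le]
  have ht3 : t ^ 3 = t * (s ^ 2 + 1) := by rw [pow_succ, hts]; ring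
  rw [show (s - 1) / s ^ 3 - ((s - 1) / s ^ 3) ^ 2 = (s - 1) * (s ^ 3 - s + 1) / s ^ 6 by
    field_simp; ring, div_le_div_iff₀ (by positivity) (by positivity), ht3]
  nlinarith

theorem mul_lowerRate_le {x y : ℝ} (hx : 1 ≤ x) (hy : y ≤ costPoly √x) :
    y * lowerRate x ≤ x / 2 := by
  have hs1 : 1 ≤ √x := one_le_sqrt.2 hx
  have hs := sq_sqrt (show 0 ≤ x by linarith)
  rw [lowerRate_eq (by linarith)]
  calc y * ((√x - 1) / √x ^ 3) ≤ costPoly √x * ((√x - 1) / √x ^ 3) := by gcongr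
    _ = (√x ^ 5 - 1) / (2 * √x ^ 3) := by unfold costPoly; field_simp; ring
    _ ≤ √x ^ 2 / 2 := by
        rw [div_le_div_iff₀ (by positivity) (by norm_num)]; nlinarith
    _ = x / 2 := by rw [hs]

/-- Below `8` the rate is replaced by decimals lying between it and the orbit of `x ↦ x - x²`
started at `1 / 4` (which is `ρ 1 N / 2`). -/
noncomputable def comparisonRate : ℕ → ℝ
  | 1 => 1 / 4
  | 2 => 0.185
  | 3 => 0.1505
  | 4 => 0.1275
  | 5 => 0.1111
  | 6 => 0.0987
  | 7 => 0.0889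
  | n => lowerRate n

theorem comparisonRate_of_le {n : ℕ} (hn : 8 ≤ n) : comparisonRate n = lowerRate n := by
  obtain ⟨m, rfl⟩ := Nat.exists_eq_add_of_le' hn
  rfl

theorem lowerRate_le_comparisonRate {n : ℕ} (hn : 1 ≤ n) : lowerRate n ≤ comparisonRate n := by
  rcases Nat.lt_or_ge n 8 with h | h
  · interval_cases n <;> exact lowerRate_le (by norm_num) (by norm_num [comparisonRate])
  · exact (comparisonRate_of_le h).ge

theorem comparisonRate_succ_le (N : ℕ) :
    comparisonRate (N + 2) ≤ comparisonRate (N + 1) - comparisonRate (N + 1) ^ 2 := by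
  rcases Nat.lt_or_ge N 6 with h | h
  · interval_cases N <;> norm_num [comparisonRate]
  rcases h.eq_or_lt with rfl | h
  · rw [comparisonRate_of_le le_rfl]
    exact lowerRate_le (by norm_num) (by norm_num [comparisonRate])
  · rw [comparisonRate_of_le (by omega), comparisonRate_of_le (by omega)]
    have h' := lowerRate_succ_le (show (7 : ℝ) ≤ ((N + 1 : ℕ) : ℝ) by exact_mod_cast (by omega))
    rwa [show ((N + 1 : ℕ) : ℝ) + 1 = ((N + 2 : ℕ) : ℝ) by push_cast; ring] at h'

section cost

variable {c : ℕ → ℝ}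

theorem cost_nonneg (hc1 : c 1 = 2) (hc : ∀ k, 1 ≤ k → c (k + 1) = costStep (c k)) :
    ∀ k, 1 ≤ k → 0 ≤ c k := by
  intro k hk
  induction k, hk using Nat.le_induction with
  | base => rw [hc1]; norm_num
  | succ k hk ih => rw [hc k hk]; linarith [le_costStep (c k)]

theorem cost_bounds_le_seven (hc1 : c 1 = 2) (hc : ∀ k, 1 ≤ k → c (k + 1) = costStep (c k)) :
    c 2 ≤ 5.24 ∧ c 3 ≤ 9.63 ∧ c 4 ≤ 15.14 ∧ c 5 ≤ 21.74 ∧ c 6 ≤ 29.41 ∧ c 7 ≤ 38.15 := by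
  have step : ∀ k, 1 ≤ k → ∀ p q : ℝ, c k ≤ p → p + 1 ≤ q → 1 + 2 * p ≤ (q - p - 1) ^ 2 →
      c (k + 1) ≤ q := fun k hk p q hp hq h => (hc k hk) ▸ costStep_le_of_le hp hq h
  have h2 := step 1 le_rfl 2 5.24 hc1.le (by norm_num) (by norm_num)
  have h3 := step 2 (by norm_num) _ 9.63 h2 (by norm_num) (by norm_num)
  have h4 := step 3 (by norm_num) _ 15.14 h3 (by norm_num) (by norm_num)
  have h5 := step 4 (by norm_num) _ 21.74 h4 (by norm_num) (by norm_num)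
  have h6 := step 5 (by norm_num) _ 29.41 h5 (by norm_num) (by norm_num)
  have h7 := step 6 (by norm_num) _ 38.15 h6 (by norm_num) (by norm_num)
  exact ⟨h2, h3, h4, h5, h6, h7⟩

theorem cost_le_costPoly (hc1 : c 1 = 2) (hc : ∀ k, 1 ≤ k → c (k + 1) = costStep (c k)) :
    ∀ k, 7 ≤ k → c k ≤ costPoly √k := by
  intro k hk
  induction k, hk using Nat.le_induction with
  | base =>
    have h7 := (cost_bounds_le_seven hc1 hc).2.2.2.2.2
    have hs : (2.6 : ℝ) ≤ √7 := le_sqrt_of_sq_le (by norm_num)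
    have hs2 : √7 ^ 2 = 7 := sq_sqrt (by norm_num)
    unfold costPoly
    push_cast
    nlinarith
  | succ k hk ih =>
    have hk' : (7 : ℝ) ≤ k := by exact_mod_cast hk
    rw [hc k (by omega)]
    refine costStep_le_costPoly ih (sqrt_nonneg _) ?_ (sqrt_nonneg _) ?_
    · rwa [sq_sqrt (by positivity)]
    · push_cast; rw [sq_sqrt (by positivity), sq_sqrt (by positivity)]

theorem cost_mul_comparisonRate_le (hc1 : c 1 = 2)
    (hc : ∀ k, 1 ≤ k → c (k + 1) = costStep (c k)) :
    ∀ k, 1 ≤ k → c k * comparisonRate k ≤ k / 2 := by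
  intro k hk
  rcases Nat.lt_or_ge k 8 with h | h
  · obtain ⟨h2, h3, h4, h5, h6, h7⟩ := cost_bounds_le_seven hc1 hc
    interval_cases k <;> norm_num [comparisonRate] <;> linarith
  · rw [comparisonRate_of_le h]
    exact mul_lowerRate_le (by exact_mod_cast (by omega : 1 ≤ k))
      (cost_le_costPoly hc1 hc k (by omega))

theorem update_cost_sub_sq (hc1 : c 1 = 2) (hc : ∀ k, 1 ≤ k → c (k + 1) = costStep (c k))
    (k : ℕ) : (Function.update c 0 0 (k + 1) - Function.update c 0 0 k) ^ 2
      = 2 * Function.update c 0 0 (k + 1) := by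
  rcases k with _ | k
  · rw [zero_add, Function.update_self, Function.update_of_ne one_ne_zero, hc1]
    norm_num
  · simp only [Function.update_of_ne (Nat.succ_ne_zero _), hc (k + 1) (by omega)]
    exact costStep_sub_sq (cost_nonneg hc1 hc _ (by omega))

end cost

/-- For the dynamic-programming values `ρ k N` of the `k`-purchase problem,
`ρ k N ≥ (1 - N^{-1/2}) · c k / N` for all `N ≥ k ≥ 1`. -/
theorem stmt_6 (ρ : ℕ → ℕ → ℝ)
    (h0 : ∀ N : ℕ, ρ 0 N = 0)
    (hdiag : ∀ k : ℕ, 1 ≤ k → ρ k k = (k : ℝ) / 2)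
    (hrec : ∀ k N : ℕ, 1 ≤ k → k < N →
      ρ k N = ρ k (N - 1) - (ρ k (N - 1) - ρ (k - 1) (N - 1)) ^ 2 / 2)
    (c : ℕ → ℝ) (hc1 : c 1 = 2)
    (hcrec : ∀ k : ℕ, 2 ≤ k → c k = c (k - 1) + 1 + Real.sqrt (1 + 2 * c (k - 1))) :
    ∀ k N : ℕ, 1 ≤ k → k ≤ N → (1 - 1 / Real.sqrt N) * c k / N ≤ ρ k N := by
  have hρ : IsPurchaseCost ρ :=
    { zero := h0
      diag := fun k => by
        rcases k with _ | k
        · simp [h0]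
        · exact hdiag _ (by omega)
      succ := fun k N hkN => hrec (k + 1) (N + 1) (by omega) (by omega) }
  have hc : ∀ k, 1 ≤ k → c (k + 1) = costStep (c k) := fun k hk => hcrec (k + 1) (by omega)
  intro k N hk hkN
  have hd (k : ℕ) : Function.update c 0 0 k * comparisonRate k ≤ k / 2 := by
    rcases k with _ | k
    · simp
    · rw [Function.update_of_ne (Nat.succ_ne_zero _)]
      exact cost_mul_comparisonRate_le hc1 hc _ (by omega)
  have hρk := hρ.mul_le_of_le_sub_sq (by simp) (update_cost_sub_sq hc1 hc) hd
    comparisonRate_succ_le N k hkN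
  rw [Function.update_of_ne (by omega)] at hρk
  calc (1 - 1 / √N) * c k / N = c k * lowerRate N := by unfold lowerRate; ring
    _ ≤ c k * comparisonRate N :=
      mul_le_mul_of_nonneg_left (lowerRate_le_comparisonRate (by omega)) (cost_nonneg hc1 hc k hk)
    _ ≤ ρ k N := hρk
end

section
/- For every real x ≥ 7, the quantity g(x) = (sqrt(1/x) − sqrt(1/(x−1)))/x + (1 − sqrt(1/(x−1)))/(x(x−1)) − (1 − sqrt(1/(x−1)))^2/(x−1)^2 is nonnegative. -/
/-!
Put `s = √x` and `t = √(x - 1)`, so that `s² = t² + 1` and `s - t = 1 / (s + t)`. Clearing the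
denominator `(s + t) s³ t⁶` turns `g(x)` into `s t B(t) - A(t)` with
`A = 2t⁴ - 3t³ + 3t² - 2t + 1` and `B = t³ - 2t² + 2t - 1 = (t - 1)(t² - t + 1)`.
As `s t B ≥ 0`, it suffices that `A² ≤ (s t B)² = (t² + 1) t² B²`, a polynomial inequality of
degree 10 whose Taylor coefficients at `61/25 < √6 ≤ t` are all positive.
-/

open Real
open scoped NNReal

lemma quartic_sq_le_of_ge (t : ℝ) (ht : 61 / 25 ≤ t) :
    (2 * t ^ 4 - 3 * t ^ 3 + 3 * t ^ 2 - 2 * t + 1) ^ 2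
      ≤ (t ^ 2 + 1) * t ^ 2 * (t ^ 3 - 2 * t ^ 2 + 2 * t - 1) ^ 2 := by
  obtain ⟨w, hw, rfl⟩ : ∃ w, 0 ≤ w ∧ t = 61 / 25 + w := ⟨t - 61 / 25, by linarith, by ring⟩
  lift w to ℝ≥0 using hw
  rw [← sub_nonneg]
  ring_nf
  positivity

lemma quartic_le_mul_cubic (s t : ℝ) (hs : 0 ≤ s) (hst : s ^ 2 = t ^ 2 + 1) (ht : 61 / 25 ≤ t) :
    2 * t ^ 4 - 3 * t ^ 3 + 3 * t ^ 2 - 2 * t + 1 ≤ s * t * (t ^ 3 - 2 * t ^ 2 + 2 * t - 1) := by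
  have hB : 0 ≤ t ^ 3 - 2 * t ^ 2 + 2 * t - 1 := by
    have : t ^ 3 - 2 * t ^ 2 + 2 * t - 1 = (t - 1) * ((t - 1 / 2) ^ 2 + 3 / 4) := by ring
    rw [this]
    exact mul_nonneg (by linarith) (by positivity)
  refine le_of_pow_le_pow_left₀ two_ne_zero (mul_nonneg (by positivity) hB) ?_
  calc (2 * t ^ 4 - 3 * t ^ 3 + 3 * t ^ 2 - 2 * t + 1) ^ 2
      ≤ (t ^ 2 + 1) * t ^ 2 * (t ^ 3 - 2 * t ^ 2 + 2 * t - 1) ^ 2 := quartic_sq_le_of_ge t ht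
    _ = (s * t * (t ^ 3 - 2 * t ^ 2 + 2 * t - 1)) ^ 2 := by rw [mul_pow, mul_pow, hst]

lemma g_eq_div_of_sq_eq (s t : ℝ) (hs : 0 < s) (ht : 0 < t) (hst : s ^ 2 = t ^ 2 + 1) :
    (1 / s - 1 / t) / s ^ 2 + (1 - 1 / t) / (s ^ 2 * t ^ 2) - (1 - 1 / t) ^ 2 / (t ^ 2) ^ 2
      = (s * t * (t ^ 3 - 2 * t ^ 2 + 2 * t - 1) - (2 * t ^ 4 - 3 * t ^ 3 + 3 * t ^ 2 - 2 * t + 1))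
        / ((s + t) * s ^ 3 * t ^ 6) := by
  have : s + t ≠ 0 := by positivity
  field_simp
  linear_combination (-1 + 2 * t - 2 * t ^ 2 + t ^ 3 - t ^ 5 - s * t + 2 * s * t ^ 2 - s * t ^ 3
    - s ^ 2 + 2 * s ^ 2 * t - s ^ 2 * t ^ 2) * hst

/-- For `x ≥ 7`,
`g(x) = (√(1/x) - √(1/(x-1)))/x + (1 - √(1/(x-1)))/(x(x-1)) - (1 - √(1/(x-1)))²/(x-1)² ≥ 0`. -/
theorem stmt_8 (x : ℝ) (hx : 7 ≤ x) :
    0 ≤ (Real.sqrt (1 / x) - Real.sqrt (1 / (x - 1))) / x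
      + (1 - Real.sqrt (1 / (x - 1))) / (x * (x - 1))
      - (1 - Real.sqrt (1 / (x - 1))) ^ 2 / (x - 1) ^ 2 := by
  set s := √x
  set t := √(x - 1)
  have hs : 0 < s := sqrt_pos.2 (by linarith)
  have ht : 61 / 25 ≤ t := le_sqrt_of_sq_le (by linarith)
  have hxs : x = s ^ 2 := (sq_sqrt (by linarith)).symm
  have hx1 : x - 1 = t ^ 2 := (sq_sqrt (by linarith)).symm
  have hs_inv : √(1 / x) = 1 / s := by rw [one_div, sqrt_inv, one_div]
  have ht_inv : √(1 / (x - 1)) = 1 / t := by rw [one_div, sqrt_inv, one_div]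
  rw [hs_inv, ht_inv, hx1, hxs, g_eq_div_of_sq_eq s t hs (by linarith) (by linarith)]
  exact div_nonneg (sub_nonneg.2 (quartic_le_mul_cubic s t hs.le (by linarith) ht)) (by positivity)
end

section
/- Let L ≥ 2 be an integer, let λ > 0, and let x_0, x_1, …, x_L be reals with 1 = x_0 ≥ x_1 ≥ x_2 ≥ … ≥ x_L > 0 and with the sum over i = 2,…,L of (i−1) x_i at least λ. Then the sum over i = 1,…,L of x_i^2 / x_{i−1} is at least (λ / L^2)^{4/3}. -/
/-!
Only the first two terms of the sum are needed. Since the sequence is nonincreasing, the weighted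
sum `∑ (i - 1) x_i` is at most `L² x₂`, so `t := λ / L² ≤ x₂`. With `a = x₁` and `b = x₂`, the
first two terms are `a² + b² / a`, and `a² + b² / a ≥ b^{4/3} ≥ t^{4/3}`: with `c = b^{2/3}` the
first inequality is the polynomial inequality `a c² ≤ a³ + c³` for `a, c ≥ 0`.
-/

open Finset

lemma mul_sq_le_pow_three_add_pow_three {a c : ℝ} (ha : 0 ≤ a) (hc : 0 ≤ c) :
    a * c ^ 2 ≤ a ^ 3 + c ^ 3 := by
  nlinarith [mul_nonneg ha (sq_nonneg (a - c)), mul_nonneg hc (sq_nonneg (a - c)),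
    mul_nonneg (sq_nonneg a) hc]

lemma sq_le_sq_add_pow_three_div {a c : ℝ} (ha : 0 < a) (hc : 0 ≤ c) :
    c ^ 2 ≤ a ^ 2 + c ^ 3 / a := by
  rw [← sub_le_iff_le_add', le_div_iff₀ ha]
  nlinarith [mul_sq_le_pow_three_add_pow_three ha.le hc]

lemma rpow_four_thirds_le_sq_add_sq_div {a b : ℝ} (ha : 0 < a) (hb : 0 ≤ b) :
    b ^ (4 / 3 : ℝ) ≤ a ^ 2 + b ^ 2 / a := by
  have hc := sq_le_sq_add_pow_three_div ha (Real.rpow_nonneg hb (2 / 3))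
  have hsq : (b ^ (2 / 3 : ℝ)) ^ 2 = b ^ (4 / 3 : ℝ) := by
    rw [← Real.rpow_mul_natCast hb]; norm_num
  have hcube : (b ^ (2 / 3 : ℝ)) ^ 3 = b ^ 2 := by
    rw [← Real.rpow_mul_natCast hb]; norm_num
  rwa [hsq, hcube] at hc

lemma Finset.add_le_sum_of_nonneg {ι : Type*} [DecidableEq ι] {s : Finset ι} {f : ι → ℝ}
    {i j : ι} (hij : i ≠ j) (hi : i ∈ s) (hj : j ∈ s) (hf : ∀ k ∈ s, 0 ≤ f k) :
    f i + f j ≤ ∑ k ∈ s, f k := by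
  rw [← sum_pair hij]
  exact sum_le_sum_of_subset_of_nonneg (by simp [insert_subset_iff, hi, hj])
    fun k hk _ ↦ hf k hk

lemma sum_Icc_two_sub_one_mul_le {x : ℕ → ℝ} {L : ℕ} (hL : 2 ≤ L)
    (hanti : AntitoneOn x (Set.Icc 2 L)) (hnonneg : 0 ≤ x L) :
    ∑ i ∈ Icc 2 L, ((i : ℝ) - 1) * x i ≤ (L : ℝ) ^ 2 * x 2 := by
  have hterm : ∀ i ∈ Icc 2 L, ((i : ℝ) - 1) * x i ≤ L * x 2 := by
    intro i hi
    have hi' := mem_Icc.mp hi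
    have hxi : x i ≤ x 2 := hanti (by simp [hL]) (by simpa using hi') hi'.1
    have hxi₀ : 0 ≤ x i := hnonneg.trans (hanti (by simpa using hi') (by simp [hL]) hi'.2)
    have hiL : (i : ℝ) ≤ L := by exact_mod_cast hi'.2
    nlinarith
  have hcard : ((Icc 2 L).card : ℝ) ≤ L := by
    rw [Nat.card_Icc]; exact_mod_cast Nat.sub_le_of_le_add (by omega)
  calc ∑ i ∈ Icc 2 L, ((i : ℝ) - 1) * x i ≤ (Icc 2 L).card • (L * x 2) :=
        sum_le_card_nsmul _ _ _ hterm
    _ ≤ (L : ℝ) ^ 2 * x 2 := by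
        rw [nsmul_eq_mul, sq, mul_assoc]
        have : 0 ≤ x 2 := hnonneg.trans (hanti (by simp [hL]) (by simp [hL]) hL)
        gcongr

/-- If `L ≥ 2`, `λ > 0` and `1 = x₀ ≥ x₁ ≥ … ≥ x_L > 0` with
`∑_{i=2}^{L} (i-1) x_i ≥ λ`, then `∑_{i=1}^{L} x_i²/x_{i-1} ≥ (λ/L²)^{4/3}`. -/
theorem stmt_12 (L : ℕ) (hL : 2 ≤ L) (lam : ℝ) (hlam : 0 < lam) (x : ℕ → ℝ)
    (hx0 : x 0 = 1) (hmono : ∀ i : ℕ, i < L → x (i + 1) ≤ x i) (hpos : 0 < x L)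
    (hsum : lam ≤ ∑ i ∈ Finset.Icc 2 L, ((i : ℝ) - 1) * x i) :
    (lam / (L : ℝ) ^ 2) ^ ((4 : ℝ) / 3) ≤ ∑ i ∈ Finset.Icc 1 L, x i ^ 2 / x (i - 1) := by
  have hanti : AntitoneOn x (Set.Iic L) :=
    antitoneOn_of_add_one_le Set.ordConnected_Iic fun i _ _ hi ↦ hmono i hi
  have hxpos : ∀ i ≤ L, 0 < x i := fun i hi ↦
    hpos.trans_le (hanti hi (Set.mem_Iic.mpr le_rfl) hi)
  have hx2 : lam / (L : ℝ) ^ 2 ≤ x 2 := by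
    rw [div_le_iff₀' (by positivity)]
    exact hsum.trans (sum_Icc_two_sub_one_mul_le hL
      (hanti.mono fun i hi ↦ hi.2) hpos.le)
  have hfirst_two : x 1 ^ 2 / x 0 + x 2 ^ 2 / x 1 ≤ ∑ i ∈ Icc 1 L, x i ^ 2 / x (i - 1) :=
    add_le_sum_of_nonneg (f := fun i ↦ x i ^ 2 / x (i - 1)) (by norm_num)
      (by simp only [mem_Icc]; omega) (by simp only [mem_Icc]; omega)
      fun i hi ↦ div_nonneg (sq_nonneg _) (hxpos _ (by simp only [mem_Icc] at hi; omega)).le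
  calc (lam / (L : ℝ) ^ 2) ^ ((4 : ℝ) / 3) ≤ x 2 ^ ((4 : ℝ) / 3) :=
        Real.rpow_le_rpow (by positivity) hx2 (by norm_num)
    _ ≤ x 1 ^ 2 + x 2 ^ 2 / x 1 :=
        rpow_four_thirds_le_sq_add_sq_div (hxpos 1 (by omega)) (hxpos 2 hL).le
    _ = x 1 ^ 2 / x 0 + x 2 ^ 2 / x 1 := by rw [hx0, div_one]
    _ ≤ ∑ i ∈ Icc 1 L, x i ^ 2 / x (i - 1) := hfirst_two
end

section
/- For each n, assign to every edge e of the complete graph K_n on vertex set {1,…,n} an independent uniform [0,1] cost X_e. Then the probability that there exist a vertex v and a set S of neighbors of v with |S| = k for some integer k > (log n)^2 such that the sum over w in S of X_{vw} is at most k^2/(3n), tends to 0 as n → ∞. -/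
/-!
Fix a centre `v` and a size `k`, and put `θ = 2k/(3n)`. A star of `k` edges at `v` of cost at most
`k²/(3n)` forces `∑_w max(θ - X_{vw}, 0) ≥ kθ - k²/(3n) = k²/(3n)`, an event that no longer
depends on the star. The summands are independent with `E exp(max(θ - X, 0)/θ) = 1 + (e - 2)θ`,
so Chernoff's bound with parameter `1/θ` gives probability at most
`exp(-k/2 + 2(e - 2)k/3) = exp(-c k)` with `c = 1/2 - 2(e - 2)/3 > 0`. A union bound over the
`n(n + 1)` pairs `(v, k)` with `k > (log n)²` leaves `n(n + 1) exp(-c (log n)²) → 0`.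
-/

open MeasureTheory

/-- The product probability measure putting an independent uniform `[0,1]` cost on every
(unordered) pair of vertices of the complete graph on `Fin n`; the cost of the edge `{v,w}`
is the coordinate `s(v,w)`. -/
noncomputable def edgeMeasure (n : ℕ) : Measure (Sym2 (Fin n) → ℝ) :=
  Measure.pi fun _ => volume.restrict (Set.Icc 0 1)

open ProbabilityTheory Real Finset Filter Topology
open scoped ENNReal

instance isProbabilityMeasure_restrict_Icc_zero_one :
    IsProbabilityMeasure (volume.restrict (Set.Icc (0 : ℝ) 1)) := ⟨by simp⟩

theorem integral_exp_inv_mul_max_sub_eq {θ : ℝ} (hθ0 : 0 < θ) (hθ1 : θ ≤ 1) :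
    ∫ x in Set.Icc (0 : ℝ) 1, exp (θ⁻¹ * max (θ - x) 0) = 1 + (exp 1 - 2) * θ := by
  have hcont : Continuous fun x : ℝ => exp (θ⁻¹ * max (θ - x) 0) := by fun_prop
  have hleft : ∫ x in (0 : ℝ)..θ, exp (θ⁻¹ * max (θ - x) 0) = θ * (exp 1 - 1) := by
    have hEq : Set.EqOn (fun x : ℝ => exp (θ⁻¹ * max (θ - x) 0))
        (fun x => exp (1 - θ⁻¹ * x)) (Set.uIcc 0 θ) := by
      intro x hx
      rw [Set.uIcc_of_le hθ0.le] at hx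
      simp only [max_eq_left (sub_nonneg.2 hx.2), mul_sub, inv_mul_cancel₀ hθ0.ne']
    rw [intervalIntegral.integral_congr hEq,
      intervalIntegral.integral_comp_mul_left (fun y => exp (1 - y)) (inv_ne_zero hθ0.ne'),
      intervalIntegral.integral_comp_sub_left]
    simp [inv_mul_cancel₀ hθ0.ne', integral_exp]
  have hright : ∫ x in θ..(1 : ℝ), exp (θ⁻¹ * max (θ - x) 0) = 1 - θ := by
    have hEq : Set.EqOn (fun x : ℝ => exp (θ⁻¹ * max (θ - x) 0)) 1 (Set.uIcc θ 1) := by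
      intro x hx
      rw [Set.uIcc_of_le hθ1] at hx
      simp [max_eq_right (sub_nonpos.2 hx.1)]
    simp [intervalIntegral.integral_congr hEq]
  rw [integral_Icc_eq_integral_Ioc, ← intervalIntegral.integral_of_le zero_le_one,
    ← intervalIntegral.integral_add_adjacent_intervals (b := θ) (hcont.intervalIntegrable _ _)
      (hcont.intervalIntegrable _ _), hleft, hright]
  ring

theorem mgf_max_sub_le {θ : ℝ} (hθ0 : 0 < θ) (hθ1 : θ ≤ 1) :
    mgf (fun x => max (θ - x) 0) (volume.restrict (Set.Icc (0 : ℝ) 1)) θ⁻¹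
      ≤ exp ((exp 1 - 2) * θ) := by
  rw [mgf, integral_exp_inv_mul_max_sub_eq hθ0 hθ1, add_comm]
  exact add_one_le_exp _

theorem measure_pi_le_sum_max_sub_le {ι : Type*} [Fintype ι] (T : Finset ι) {θ : ℝ}
    (hθ0 : 0 < θ) (hθ1 : θ ≤ 1) (a : ℝ) :
    Measure.pi (fun _ : ι => volume.restrict (Set.Icc (0 : ℝ) 1))
        {X | a ≤ ∑ i ∈ T, max (θ - X i) 0}
      ≤ ENNReal.ofReal (exp (-(a / θ) + #T * ((exp 1 - 2) * θ))) := by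
  set ν := volume.restrict (Set.Icc (0 : ℝ) 1)
  set μ := Measure.pi fun _ : ι => ν
  set g : ℝ → ℝ := fun x => max (θ - x) 0
  have hg : Measurable g := by fun_prop
  set Y : ι → (ι → ℝ) → ℝ := fun i X => g (X i)
  have hY : ∀ i, Measurable (Y i) := fun i => hg.comp (measurable_pi_apply i)
  have hindep : iIndepFun Y μ := iIndepFun_pi fun _ => hg.aemeasurable
  have hint : Integrable (fun x => exp (θ⁻¹ * g x)) ν :=
    (by fun_prop : Continuous fun x => exp (θ⁻¹ * g x)).integrableOn_Icc
  have heval : ∀ i, MeasurePreserving (Function.eval i) μ ν :=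
    measurePreserving_eval fun _ => ν
  have hmgf : ∀ i, mgf (Y i) μ θ⁻¹ = mgf g ν θ⁻¹ := fun i => by
    rw [mgf, mgf, ← (heval i).map_eq, integral_map (heval i).measurable.aemeasurable]
    rw [(heval i).map_eq]
    exact hint.aestronglyMeasurable
  have hintY : ∀ i ∈ T, Integrable (fun X => exp (θ⁻¹ * Y i X)) μ := fun i _ =>
    (heval i).integrable_comp_of_integrable hint
  have hset : {X | a ≤ (∑ i ∈ T, Y i) X} = {X | a ≤ ∑ i ∈ T, max (θ - X i) 0} := by
    simp [Y, g, Finset.sum_apply]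
  rw [← hset, ← ENNReal.ofReal_toReal (measure_ne_top μ _)]
  apply ENNReal.ofReal_le_ofReal
  calc μ.real {X | a ≤ (∑ i ∈ T, Y i) X}
      ≤ exp (-θ⁻¹ * a) * mgf (∑ i ∈ T, Y i) μ θ⁻¹ :=
        measure_ge_le_exp_mul_mgf a (by positivity) (hindep.integrable_exp_mul_sum hY hintY)
    _ = exp (-θ⁻¹ * a) * ∏ i ∈ T, mgf g ν θ⁻¹ := by
        rw [hindep.mgf_sum hY, prod_congr rfl fun i _ => hmgf i]
    _ ≤ exp (-θ⁻¹ * a) * exp ((exp 1 - 2) * θ) ^ #T := by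
        rw [prod_const]
        gcongr
        · exact mgf_nonneg
        · exact mgf_max_sub_le hθ0 hθ1
    _ = exp (-(a / θ) + #T * ((exp 1 - 2) * θ)) := by
        rw [← exp_nat_mul, ← exp_add]
        ring_nf

theorem card_mul_sub_sum_le_sum_max {ι : Type*} {s t : Finset ι} (hst : s ⊆ t) (f : ι → ℝ)
    (θ : ℝ) : #s * θ - ∑ i ∈ s, f i ≤ ∑ i ∈ t, max (θ - f i) 0 :=
  calc #s * θ - ∑ i ∈ s, f i = ∑ i ∈ s, (θ - f i) := by
        rw [sum_sub_distrib, sum_const, nsmul_eq_mul]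
    _ ≤ ∑ i ∈ s, max (θ - f i) 0 := sum_le_sum fun _ _ => le_max_left _ _
    _ ≤ ∑ i ∈ t, max (θ - f i) 0 :=
        sum_le_sum_of_subset_of_nonneg hst fun _ _ _ => le_max_right _ _

/-- Contains the loop `s(v, v)` as well, which only enlarges the sums bounded below. -/
def starEdges {n : ℕ} (v : Fin n) : Finset (Sym2 (Fin n)) := univ.image fun w => s(v, w)

theorem le_sum_max_sub_of_star_cost_le {n : ℕ} {X : Sym2 (Fin n) → ℝ} {v : Fin n}
    {S : Finset (Fin n)} (hS : ∑ w ∈ S, X s(v, w) ≤ (#S : ℝ) ^ 2 / (3 * n)) :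
    (#S : ℝ) ^ 2 / (3 * n) ≤ ∑ e ∈ starEdges v, max (2 * #S / (3 * n) - X e) 0 := by
  have hinj : Function.Injective fun w : Fin n => s(v, w) := fun _ _ => Sym2.congr_right.1
  have key := card_mul_sub_sum_le_sum_max
    (image_subset_image (f := fun w => s(v, w)) (subset_univ S)) X (2 * #S / (3 * n))
  rw [card_image_of_injective _ hinj, sum_image fun _ _ _ _ h => hinj h] at key
  calc (#S : ℝ) ^ 2 / (3 * n) = #S * (2 * #S / (3 * n)) - (#S : ℝ) ^ 2 / (3 * n) := by ring
    _ ≤ _ := by unfold starEdges; linarith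

noncomputable def starRate : ℝ := 1 / 2 - 2 * (exp 1 - 2) / 3

theorem starRate_pos : 0 < starRate := by
  have := exp_one_lt_d9
  rw [starRate]
  linarith

theorem edgeMeasure_star_deficit_le {n k : ℕ} (hk : 0 < k) (hkn : k ≤ n) (v : Fin n) :
    edgeMeasure n
        {X | (k : ℝ) ^ 2 / (3 * n) ≤ ∑ e ∈ starEdges v, max (2 * k / (3 * n) - X e) 0}
      ≤ ENNReal.ofReal (exp (-(starRate * k))) := by
  have hkR : (0 : ℝ) < k := by exact_mod_cast hk
  have hknR : (k : ℝ) ≤ n := by exact_mod_cast hkn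
  have hn : (0 : ℝ) < n := hkR.trans_le hknR
  have hθ1 : 2 * (k : ℝ) / (3 * n) ≤ 1 := by
    rw [div_le_one (by positivity)]
    linarith
  refine (measure_pi_le_sum_max_sub_le _ (by positivity) hθ1 _).trans
    (ENNReal.ofReal_le_ofReal (exp_le_exp.2 ?_))
  have hcard : (#(starEdges v) : ℝ) ≤ n := by
    exact_mod_cast card_image_le.trans (by simp)
  have he : 0 < exp 1 - 2 := by linarith [exp_one_gt_d9]
  calc _ ≤ -((k : ℝ) ^ 2 / (3 * n) / (2 * k / (3 * n)))
          + n * ((exp 1 - 2) * (2 * k / (3 * n))) := by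
        gcongr
    _ = -(starRate * k) := by
        rw [starRate]
        field_simp
        ring

theorem edgeMeasure_exists_cheap_star_le (n : ℕ) :
    edgeMeasure n {X | ∃ (v : Fin n) (S : Finset (Fin n)), v ∉ S ∧
        (log n) ^ 2 < (#S : ℝ) ∧ ∑ w ∈ S, X s(v, w) ≤ (#S : ℝ) ^ 2 / (3 * n)}
      ≤ ENNReal.ofReal (n * (n + 1) * exp (-(starRate * log n ^ 2))) := by
  set P := (univ ×ˢ range (n + 1)).filter fun p : Fin n × ℕ => log n ^ 2 < p.2
  set deficit : Fin n × ℕ → Set (Sym2 (Fin n) → ℝ) := fun p =>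
    {X | (p.2 : ℝ) ^ 2 / (3 * n) ≤ ∑ e ∈ starEdges p.1, max (2 * p.2 / (3 * n) - X e) 0}
  have hdeficit : ∀ p ∈ P,
      edgeMeasure n (deficit p) ≤ ENNReal.ofReal (exp (-(starRate * log n ^ 2))) := by
    rintro ⟨v, k⟩ hp
    simp only [P, mem_filter, mem_product, mem_univ, mem_range, true_and] at hp
    have hk : 0 < k := by exact_mod_cast (sq_nonneg _).trans_lt hp.2
    refine (edgeMeasure_star_deficit_le hk (Nat.lt_succ_iff.1 hp.1) v).trans
      (ENNReal.ofReal_le_ofReal (exp_le_exp.2 ?_))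
    nlinarith [starRate_pos]
  have hP : (#P : ℝ≥0∞) ≤ n * (n + 1) := by
    exact_mod_cast (card_filter_le _ _).trans (by simp)
  calc edgeMeasure n _ ≤ edgeMeasure n (⋃ p ∈ P, deficit p) := by
        refine measure_mono ?_
        rintro X ⟨v, S, -, hcard, hS⟩
        have hSn : #S ≤ n := by simpa using card_le_univ S
        exact Set.mem_biUnion (x := (v, #S)) (by simp [P, hSn, hcard])
          (le_sum_max_sub_of_star_cost_le hS)
    _ ≤ ∑ p ∈ P, edgeMeasure n (deficit p) := measure_biUnion_finset_le _ _
    _ ≤ ∑ p ∈ P, ENNReal.ofReal (exp (-(starRate * log n ^ 2))) := sum_le_sum hdeficit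
    _ ≤ n * (n + 1) * ENNReal.ofReal (exp (-(starRate * log n ^ 2))) := by
        rw [sum_const, nsmul_eq_mul]
        gcongr
    _ = ENNReal.ofReal (n * (n + 1) * exp (-(starRate * log n ^ 2))) := by
        rw [ENNReal.ofReal_mul (by positivity), ENNReal.ofReal_mul (by positivity)]
        norm_cast

theorem tendsto_mul_succ_mul_exp_neg_mul_log_sq {c : ℝ} (hc : 0 < c) :
    Tendsto (fun n : ℕ => n * (n + 1) * exp (-(c * log n ^ 2))) atTop (𝓝 0) := by
  have hlog : Tendsto (fun n : ℕ => log n) atTop atTop :=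
    tendsto_log_atTop.comp tendsto_natCast_atTop_atTop
  have hexp : Tendsto (fun n : ℕ => exp (log n * (2 - c * log n))) atTop (𝓝 0) := by
    refine tendsto_exp_atBot.comp (hlog.atTop_mul_atBot₀ ?_)
    simpa [sub_eq_add_neg] using tendsto_atBot_add_const_left _ 2
      (tendsto_neg_atTop_atBot.comp (hlog.const_mul_atTop hc))
  refine squeeze_zero' (.of_forall fun n => by positivity) ?_ (by simpa using hexp.const_mul 2)
  filter_upwards [eventually_ge_atTop 1] with n hn
  have hn' : (1 : ℝ) ≤ n := by exact_mod_cast hn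
  have hpos : (0 : ℝ) < n := by positivity
  have hsplit : exp (log n * (2 - c * log n)) = n ^ 2 * exp (-(c * log n ^ 2)) := by
    rw [show log n * (2 - c * log n) = log n + log n + -(c * log n ^ 2) by ring, exp_add, exp_add,
      exp_log hpos]
    ring
  rw [hsplit]
  have : (n : ℝ) * (n + 1) ≤ 2 * n ^ 2 := by nlinarith
  nlinarith [exp_pos (-(c * log n ^ 2))]

/-- W.h.p. (as `n → ∞`) there is no star with `k > (log n)²` edges of total
cost at most `k²/(3n)`: the probability that some vertex `v` and some set `S` of `k > (log n)²`
other vertices satisfy `∑_{w ∈ S} X_{vw} ≤ k²/(3n)` tends to `0`. -/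
theorem stmt_13 :
    Filter.Tendsto (fun n : ℕ =>
      edgeMeasure n {X | ∃ (v : Fin n) (S : Finset (Fin n)), v ∉ S ∧
        (Real.log n) ^ 2 < (S.card : ℝ) ∧
        ∑ w ∈ S, X s(v, w) ≤ (S.card : ℝ) ^ 2 / (3 * n)})
      Filter.atTop (nhds 0) := by
  refine tendsto_of_tendsto_of_tendsto_of_le_of_le tendsto_const_nhds ?_ (fun _ => zero_le)
    edgeMeasure_exists_cheap_star_le
  simpa using ENNReal.tendsto_ofReal (tendsto_mul_succ_mul_exp_neg_mul_log_sq starRate_pos)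
end

section
/- Let α = 69/100, β = 7/2, γ = αβ = 2.415, and let x be the real number in the open interval (0,1) satisfying x e^{−x} = γ e^{−γ}. Then (β/2)·(1 − x/γ + x^2/(2γ)) + (2 / ((1−α)(1 − x/γ))) · Σ_{k≥1} (k^{k−3}/k!) γ^{k−1} e^{−γk} < 2.31 < 2 ζ(3), where ζ(3) = Σ_{m≥1} 1/m^3. -/
/-!
The root `x` of `x e^{-x} = γ e^{-γ}` is located in `[0.28, 0.29]` because `t ↦ t e^{-t}` is
strictly increasing on `[0, 1]`. Since `k^k / k! ≤ e^k`, the `k`-th term of the series is at most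
`e^{1-γ} k^{-3} (γ e^{1-γ})^{k-1}`, and `γ e^{1-γ} < 0.587`; summing the first three terms exactly
and dominating the rest by a geometric series bounds the series by `0.097`. The two summands of
the cost are then at most `1.58` and `0.72`. Finally `2 ζ(3) > 2 (1 + 1/8 + 1/27) > 2.31`.
-/

open Real Finset

theorem strictMonoOn_mul_exp_neg : StrictMonoOn (fun t : ℝ => t * exp (-t)) (Set.Icc 0 1) := by
  refine strictMonoOn_of_deriv_pos (convex_Icc 0 1) (by fun_prop) fun t ht => ?_
  rw [interior_Icc] at ht
  have hderiv : HasDerivAt (fun t : ℝ => t * exp (-t)) ((1 - t) * exp (-t)) t :=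
    ((hasDerivAt_id' t).mul (hasDerivAt_neg t).exp).congr_deriv (by ring)
  rw [hderiv.deriv]
  exact mul_pos (by linarith [ht.2]) (exp_pos _)

/-- The `k = j + 1` term `k^{k-3} γ^{k-1} e^{-γk} / k!` of the series. -/
noncomputable def treeSeriesTerm (γ : ℝ) (j : ℕ) : ℝ :=
  (j + 1 : ℝ) ^ ((j : ℤ) - 2) / ((j + 1).factorial : ℝ) * γ ^ j * exp (-γ * (j + 1))

theorem treeSeriesTerm_nonneg {γ : ℝ} (hγ : 0 ≤ γ) (j : ℕ) : 0 ≤ treeSeriesTerm γ j := by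
  unfold treeSeriesTerm; positivity

theorem treeSeriesTerm_le {γ : ℝ} (hγ : 0 ≤ γ) (j : ℕ) :
    treeSeriesTerm γ j ≤ exp (1 - γ) / ((j : ℝ) + 1) ^ 3 * (γ * exp (1 - γ)) ^ j := by
  have hk : (0 : ℝ) < j + 1 := by positivity
  have hzpow : (j + 1 : ℝ) ^ ((j : ℤ) - 2) = (j + 1 : ℝ) ^ (j + 1) / (j + 1 : ℝ) ^ 3 := by
    rw [show (j : ℤ) - 2 = ((j + 1 : ℕ) : ℤ) - (3 : ℕ) by push_cast; ring,
      zpow_sub₀ hk.ne', zpow_natCast, zpow_natCast]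
  have hstirling : (j + 1 : ℝ) ^ (j + 1) / ((j + 1).factorial : ℝ) ≤ exp 1 ^ (j + 1) := by
    rw [← exp_nat_mul, mul_one]
    exact_mod_cast pow_div_factorial_le_exp (x := (j + 1 : ℝ)) hk.le (j + 1)
  have hexp : exp 1 ^ (j + 1) * exp (-γ * (j + 1)) = exp (1 - γ) ^ (j + 1) := by
    rw [← exp_nat_mul, ← exp_nat_mul, ← exp_add]; push_cast; ring_nf
  calc treeSeriesTerm γ j
      = (j + 1 : ℝ) ^ (j + 1) / ((j + 1).factorial : ℝ)
          * (γ ^ j * exp (-γ * (j + 1)) / (j + 1 : ℝ) ^ 3) := by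
        rw [treeSeriesTerm, hzpow]; ring
    _ ≤ exp 1 ^ (j + 1) * (γ ^ j * exp (-γ * (j + 1)) / (j + 1 : ℝ) ^ 3) := by gcongr
    _ = exp (1 - γ) / ((j : ℝ) + 1) ^ 3 * (γ * exp (1 - γ)) ^ j := by
        rw [← mul_div_assoc, ← mul_assoc, mul_comm _ (γ ^ j), mul_assoc, hexp]; ring

theorem summable_treeSeriesTerm {γ : ℝ} (hγ : 0 ≤ γ) (hq : γ * exp (1 - γ) < 1) :
    Summable (treeSeriesTerm γ) := by
  refine Summable.of_nonneg_of_le (treeSeriesTerm_nonneg hγ)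
    (fun j => (treeSeriesTerm_le hγ j).trans ?_)
    ((summable_geometric_of_lt_one (by positivity) hq).mul_left (exp (1 - γ)))
  gcongr
  exact div_le_self (exp_pos _).le (one_le_pow₀ (le_add_of_nonneg_left j.cast_nonneg))

theorem tsum_treeSeriesTerm_le {γ : ℝ} (hγ : 0 ≤ γ) (hq : γ * exp (1 - γ) < 1) (N : ℕ) :
    ∑' j, treeSeriesTerm γ j ≤ ∑ j ∈ range N, treeSeriesTerm γ j
      + exp (1 - γ) / ((N : ℝ) + 1) ^ 3 * (γ * exp (1 - γ)) ^ N / (1 - γ * exp (1 - γ)) := by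
  set q := γ * exp (1 - γ)
  set c := exp (1 - γ) / ((N : ℝ) + 1) ^ 3 * q ^ N
  have hs := summable_treeSeriesTerm hγ hq
  have htail : ∀ i, treeSeriesTerm γ (i + N) ≤ c * q ^ i := fun i => by
    refine (treeSeriesTerm_le hγ (i + N)).trans ?_
    rw [pow_add, show c * q ^ i = exp (1 - γ) / ((N : ℝ) + 1) ^ 3 * (q ^ i * q ^ N) by ring]
    gcongr
    exact le_add_of_nonneg_left i.cast_nonneg
  have hgeom : ∑' i, c * q ^ i = c / (1 - q) := by
    rw [tsum_mul_left, tsum_geometric_of_lt_one (by positivity) hq, div_eq_mul_inv]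
  rw [← hs.sum_add_tsum_nat_add N, ← hgeom]
  exact add_le_add_right (Summable.tsum_le_tsum htail ((summable_nat_add_iff N).2 hs)
    ((summable_geometric_of_lt_one (by positivity) hq).mul_left c)) _

theorem sum_range_three_treeSeriesTerm (γ : ℝ) :
    ∑ j ∈ range 3, treeSeriesTerm γ j
      = exp (-γ) + γ * exp (-γ) ^ 2 / 4 + γ ^ 2 * exp (-γ) ^ 3 / 6 := by
  simp only [sum_range_succ, sum_range_zero, treeSeriesTerm, ← exp_nat_mul]
  norm_num
  ring_nf

theorem exp_0415_gt : 1.51436 < exp 0.415 := by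
  have h := sum_le_exp_of_nonneg (x := 0.415) (by norm_num) 6
  norm_num [sum_range_succ, Nat.factorial] at h
  linarith

theorem exp_0415_lt : exp 0.415 < 1.51438 := by
  have h := exp_bound' (x := 0.415) (by norm_num) (by norm_num) (n := 6) (by norm_num)
  norm_num [sum_range_succ, Nat.factorial] at h
  linarith

theorem exp_028_gt : 1.32311 < exp 0.28 := by
  have h := sum_le_exp_of_nonneg (x := 0.28) (by norm_num) 5
  norm_num [sum_range_succ, Nat.factorial] at h
  linarith

theorem exp_029_lt : exp 0.29 < 1.33644 := by
  have h := exp_bound' (x := 0.29) (by norm_num) (by norm_num) (n := 5) (by norm_num)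
  norm_num [sum_range_succ, Nat.factorial] at h
  linarith

theorem exp_2415_eq : exp 2.415 = exp 1 * exp 1 * exp 0.415 := by
  rw [← exp_add, ← exp_add]; norm_num

theorem exp_2415_gt : 11.189 < exp 2.415 := by
  rw [exp_2415_eq]; nlinarith [exp_one_gt_d9, exp_0415_gt]

theorem exp_2415_lt : exp 2.415 < 11.19 := by
  rw [exp_2415_eq]; nlinarith [exp_one_lt_d9, exp_0415_lt, exp_pos 1]

theorem tsum_treeSeriesTerm_2415_le : ∑' j, treeSeriesTerm 2.415 j ≤ 0.097 := by
  have hu : exp (-2.415) ≤ 1 / 11.189 := by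
    rw [exp_neg, ← one_div]; exact one_div_le_one_div_of_le (by norm_num) exp_2415_gt.le
  have hu0 := (exp_pos (-2.415)).le
  have hc : exp (1 - 2.415) ≤ 0.243 := by
    rw [sub_eq_add_neg, exp_add]; nlinarith [exp_one_lt_d9, exp_pos 1]
  have hc0 := (exp_pos (1 - 2.415)).le
  have hq : 2.415 * exp (1 - 2.415) < 1 := by linarith
  have hhead : exp (-2.415) + 2.415 * exp (-2.415) ^ 2 / 4 + 2.415 ^ 2 * exp (-2.415) ^ 3 / 6
      ≤ 0.095 := by
    have h2 := pow_le_pow_left₀ hu0 hu 2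
    have h3 := pow_le_pow_left₀ hu0 hu 3
    norm_num at h2 h3 hu ⊢
    linarith
  have htail : exp (1 - 2.415) / (((3 : ℕ) : ℝ) + 1) ^ 3 * (2.415 * exp (1 - 2.415)) ^ 3
      / (1 - 2.415 * exp (1 - 2.415)) ≤ 0.0019 :=
    calc _ ≤ 0.243 / (((3 : ℕ) : ℝ) + 1) ^ 3 * (2.415 * 0.243) ^ 3 / (1 - 2.415 * 0.243) := by
          gcongr
      _ ≤ 0.0019 := by norm_num
  have := tsum_treeSeriesTerm_le (by norm_num) hq 3
  rw [sum_range_three_treeSeriesTerm] at this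
  linarith

theorem mem_Icc_of_mul_exp_neg_eq {x : ℝ} (hx0 : 0 < x) (hx1 : x < 1)
    (hroot : x * exp (-x) = 2.415 * exp (-2.415)) : x ∈ Set.Icc 0.28 0.29 := by
  have hx : x ∈ Set.Icc (0 : ℝ) 1 := ⟨hx0.le, hx1.le⟩
  have e28 := exp_pos 0.28
  have e29 := exp_pos 0.29
  have e2415 := exp_pos 2.415
  constructor
  · refine (strictMonoOn_mul_exp_neg.le_iff_le (by norm_num) hx).1 ?_
    change 0.28 * exp (-0.28) ≤ x * exp (-x)
    rw [hroot, exp_neg, exp_neg, ← div_eq_mul_inv, ← div_eq_mul_inv, div_le_div_iff₀ e28 e2415]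
    nlinarith [exp_2415_lt, exp_028_gt]
  · refine (strictMonoOn_mul_exp_neg.le_iff_le hx (by norm_num)).1 ?_
    change x * exp (-x) ≤ 0.29 * exp (-0.29)
    rw [hroot, exp_neg, exp_neg, ← div_eq_mul_inv, ← div_eq_mul_inv, div_le_div_iff₀ e2415 e29]
    nlinarith [exp_2415_gt, exp_029_lt]

theorem two_point_three_one_lt_two_mul_tsum_inv_cube :
    (2.31 : ℝ) < 2 * ∑' m : ℕ, 1 / ((m : ℝ) + 1) ^ 3 := by
  have hs : Summable (fun m : ℕ => 1 / ((m : ℝ) + 1) ^ 3) := by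
    simpa using (summable_nat_add_iff 1).2 (summable_one_div_nat_pow.2 (by norm_num : 1 < 3))
  have := hs.sum_le_tsum (range 3) (fun i _ => by positivity)
  norm_num [sum_range_succ] at this ⊢
  linarith

/-- With `α = 69/100`, `β = 7/2`, `γ = αβ = 2.415`, and `x ∈ (0,1)` the
root of `x e^{-x} = γ e^{-γ}`, the asymptotic expected cost of algorithm BUYTREE,
`(β/2)(1 - x/γ + x²/(2γ)) + (2/((1-α)(1 - x/γ))) ∑_{k≥1} (k^{k-3}/k!) γ^{k-1} e^{-γk}`
(sum written with `k = j+1`), is less than `2.31 < 2 ζ(3)`. -/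
theorem stmt_19 (x : ℝ) (hx0 : 0 < x) (hx1 : x < 1)
    (hroot : x * Real.exp (-x) = (2.415 : ℝ) * Real.exp (-(2.415 : ℝ))) :
    ((7 : ℝ) / 2) / 2 * (1 - x / 2.415 + x ^ 2 / (2 * 2.415))
      + 2 / ((1 - 69 / 100) * (1 - x / 2.415)) *
        ∑' j : ℕ, ((j + 1 : ℝ) ^ ((j : ℤ) - 2) / (Nat.factorial (j + 1) : ℝ) *
          (2.415 : ℝ) ^ j * Real.exp (-(2.415 : ℝ) * (j + 1)))
      < 2.31 ∧ (2.31 : ℝ) < 2 * ∑' m : ℕ, 1 / ((m : ℝ) + 1) ^ 3 := by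
  refine ⟨?_, two_point_three_one_lt_two_mul_tsum_inv_cube⟩
  change _ + _ * ∑' j, treeSeriesTerm 2.415 j < _
  obtain ⟨hx_ge, hx_le⟩ := mem_Icc_of_mul_exp_neg_eq hx0 hx1 hroot
  have hS := tsum_treeSeriesTerm_2415_le
  have hS0 : 0 ≤ ∑' j, treeSeriesTerm 2.415 j := tsum_nonneg (treeSeriesTerm_nonneg (by norm_num))
  have hfirst : (7 : ℝ) / 2 / 2 * (1 - x / 2.415 + x ^ 2 / (2 * 2.415)) ≤ 1.58 := by
    have hsq : x ^ 2 ≤ 0.57 * x - 0.0812 := by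
      nlinarith [mul_nonneg (sub_nonneg.2 hx_ge) (sub_nonneg.2 hx_le)]
    norm_num at hsq ⊢
    linarith
  have hsecond : 2 / ((1 - 69 / 100) * (1 - x / 2.415)) * ∑' j, treeSeriesTerm 2.415 j ≤ 0.72 :=
    calc 2 / ((1 - 69 / 100) * (1 - x / 2.415)) * ∑' j, treeSeriesTerm 2.415 j
        ≤ 2 / ((1 - 69 / 100) * (1 - (0.29 : ℝ) / 2.415)) * 0.097 := by
          gcongr
      _ ≤ 0.72 := by norm_num
  linarith
end
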